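/- arXiv:2302.00151 — 6 statements merged into one kernel-verified Lean document; each statement's English description precedes it below -/
import Mathlib

section
/- For all natural numbers n, m with 1 ≤ n < m and any basepoint x on Sᵐ, the homotopy group πₙ(Sᵐ, x) is trivial (a subsingleton). -/
open Metric Topology

namespace PiSphereAux

open Metric Topology Set unitInterval NNReal ENNReal Topology.Homotopy

noncomputable section

variable {n m : ℕ}

/-- Lipschitz real functions on the cube form a subalgebra. -/
def lipSubalg (n : ℕ) : Subalgebra ℝ C((Fin n → I), ℝ) where
  carrier := {f | ∃ c : ℝ≥0, LipschitzWith c ⇑f}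
  mul_mem' := by
    rintro f g ⟨cf, hf⟩ ⟨cg, hg⟩
    refine ⟨‖f‖₊ * cg + ‖g‖₊ * cf, LipschitzWith.of_dist_le_mul fun y z => ?_⟩
    have h1 : dist ((f * g) y) ((f * g) z) ≤ |f y| * dist (g y) (g z) + |g z| * dist (f y) (f z) := by
      simp only [ContinuousMap.mul_apply, Real.dist_eq]
      calc |f y * g y - f z * g z| = |f y * (g y - g z) + g z * (f y - f z)| := by ring_nf
        _ ≤ |f y * (g y - g z)| + |g z * (f y - f z)| := abs_add_le _ _
        _ = |f y| * |g y - g z| + |g z| * |f y - f z| := by rw [abs_mul, abs_mul]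
    have hfy : |f y| ≤ ‖f‖ := (f.norm_coe_le_norm y).trans_eq' (Real.norm_eq_abs _).symm
    have hgz : |g z| ≤ ‖g‖ := (g.norm_coe_le_norm z).trans_eq' (Real.norm_eq_abs _).symm
    calc dist ((f * g) y) ((f * g) z)
        ≤ |f y| * dist (g y) (g z) + |g z| * dist (f y) (f z) := h1
      _ ≤ ‖f‖ * (cg * dist y z) + ‖g‖ * (cf * dist y z) := by
          have h2 := hg.dist_le_mul y z
          have h3 := hf.dist_le_mul y z
          have h4 : (0:ℝ) ≤ dist (g y) (g z) := dist_nonneg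
          have h5 : (0:ℝ) ≤ dist (f y) (f z) := dist_nonneg
          have h6 : (0:ℝ) ≤ ‖f‖ := norm_nonneg _
          have h7 : (0:ℝ) ≤ ‖g‖ := norm_nonneg _
          nlinarith [abs_nonneg (f y), abs_nonneg (g z)]
      _ = (‖f‖₊ * cg + ‖g‖₊ * cf : ℝ≥0) * dist y z := by
          push_cast [coe_nnnorm]; ring
  add_mem' := by
    rintro f g ⟨cf, hf⟩ ⟨cg, hg⟩
    exact ⟨cf + cg, hf.add hg⟩
  algebraMap_mem' := fun r => ⟨0, by
    convert LipschitzWith.const (α := (Fin n → I)) r using 1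
    funext y
    simp [Algebra.algebraMap_eq_smul_one]⟩

lemma lipSubalg_separates (n : ℕ) : (lipSubalg n).SeparatesPoints := by
  intro y z hyz
  have : ∃ i, y i ≠ z i := by
    by_contra h; push_neg at h; exact hyz (funext h)
  obtain ⟨i, hi⟩ := this
  refine ⟨fun w => (w i : ℝ), ⟨⟨fun w => (w i : ℝ), by fun_prop⟩, ⟨1, ?_⟩, rfl⟩, ?_⟩
  · refine LipschitzWith.of_dist_le_mul fun a b => ?_
    rw [NNReal.coe_one, one_mul]
    calc dist ((a i : ℝ)) ((b i : ℝ)) = dist (a i) (b i) := (Subtype.dist_eq (a i) (b i)).symm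
      _ ≤ dist a b := dist_le_pi_dist a b i
  · exact fun h => hi (Subtype.coe_injective h)

/-- Every continuous real function on the cube is uniformly approximated by Lipschitz ones. -/
lemma exists_lip_approx (F : C((Fin n → I), ℝ)) {ε : ℝ} (hε : 0 < ε) :
    ∃ g : (Fin n → I) → ℝ, (∃ c : ℝ≥0, LipschitzWith c g) ∧ ∀ y, |g y - F y| < ε := by
  obtain ⟨g, hg⟩ := ContinuousMap.exists_mem_subalgebra_near_continuous_of_separatesPoints
    (lipSubalg n) (lipSubalg_separates n) F F.continuous ε hε
  exact ⟨(g : C((Fin n → I), ℝ)), g.2, fun y => by simpa [Real.norm_eq_abs] using hg y⟩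

lemma sqrt_sum_sq_le_sum {M : ℕ} (a : Fin M → ℝ) (ha : ∀ j, 0 ≤ a j) :
    Real.sqrt (∑ j, a j ^ 2) ≤ ∑ j, a j := by
  have hS : 0 ≤ ∑ j, a j := Finset.sum_nonneg fun j _ => ha j
  have : ∑ j, a j ^ 2 ≤ (∑ j, a j) ^ 2 := by
    calc ∑ j, a j ^ 2 ≤ ∑ j, a j * ∑ k, a k := by
          refine Finset.sum_le_sum fun j _ => ?_
          rw [pow_two]
          exact mul_le_mul_of_nonneg_left
            (Finset.single_le_sum (fun k _ => ha k) (Finset.mem_univ j)) (ha j)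
      _ = (∑ j, a j) ^ 2 := by rw [← Finset.sum_mul, pow_two]
  calc Real.sqrt (∑ j, a j ^ 2) ≤ Real.sqrt ((∑ j, a j) ^ 2) := Real.sqrt_le_sqrt this
    _ = ∑ j, a j := Real.sqrt_sq hS

lemma exists_lip_approx_eucl {M : ℕ} (F : C((Fin n → I), EuclideanSpace ℝ (Fin M)))
    {ε : ℝ} (hε : 0 < ε) :
    ∃ g : (Fin n → I) → EuclideanSpace ℝ (Fin M),
      (∃ c : ℝ≥0, LipschitzWith c g) ∧ ∀ y, ‖g y - F y‖ ≤ ε := by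
  set δ : ℝ := ε / (M + 1) with hδdef
  have hδ : 0 < δ := by positivity
  have H : ∀ j : Fin M, ∃ g : (Fin n → I) → ℝ,
      (∃ c : ℝ≥0, LipschitzWith c g) ∧ ∀ y, |g y - F y j| < δ := by
    intro j
    exact exists_lip_approx ⟨fun y => F y j, by
      exact (EuclideanSpace.proj (𝕜 := ℝ) j).continuous.comp F.continuous⟩ hδ
  choose gs hlip herr using H
  choose cs hcs using hlip
  refine ⟨fun y => (WithLp.equiv 2 (Fin M → ℝ)).symm (fun j => gs j y), ⟨∑ j, cs j, ?_⟩, ?_⟩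
  · refine LipschitzWith.of_dist_le_mul fun y z => ?_
    have h1 : dist ((WithLp.equiv 2 (Fin M → ℝ)).symm (fun j => gs j y))
        ((WithLp.equiv 2 (Fin M → ℝ)).symm (fun j => gs j z))
        = Real.sqrt (∑ j, dist (gs j y) (gs j z) ^ 2) := EuclideanSpace.dist_eq _ _
    rw [h1]
    calc Real.sqrt (∑ j, dist (gs j y) (gs j z) ^ 2) ≤ ∑ j, dist (gs j y) (gs j z) :=
          sqrt_sum_sq_le_sum _ fun j => dist_nonneg
      _ ≤ ∑ j : Fin M, (cs j : ℝ) * dist y z :=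
          Finset.sum_le_sum fun j _ => (hcs j).dist_le_mul y z
      _ = ((∑ j, cs j : ℝ≥0) : ℝ) * dist y z := by push_cast; rw [Finset.sum_mul]
  · intro y
    have h1 : ‖(WithLp.equiv 2 (Fin M → ℝ)).symm (fun j => gs j y) - F y‖
        = Real.sqrt (∑ j, ‖gs j y - F y j‖ ^ 2) := EuclideanSpace.norm_eq _
    rw [h1]
    have h2 : ∑ j : Fin M, ‖gs j y - F y j‖ ^ 2 ≤ ∑ _j : Fin M, δ ^ 2 := by
      refine Finset.sum_le_sum fun j _ => ?_
      have := (herr j y).le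
      rw [Real.norm_eq_abs]
      nlinarith [abs_nonneg (gs j y - F y j)]
    calc Real.sqrt (∑ j, ‖gs j y - F y j‖ ^ 2) ≤ Real.sqrt (∑ _j : Fin M, δ ^ 2) :=
          Real.sqrt_le_sqrt h2
      _ ≤ Real.sqrt (ε ^ 2) := by
          refine Real.sqrt_le_sqrt ?_
          rw [Finset.sum_const, Finset.card_univ, Fintype.card_fin, nsmul_eq_mul, hδdef]
          rw [div_pow]
          have hM1 : (0:ℝ) < ((M:ℝ)+1)^2 := by positivity
          rw [← mul_div_assoc, div_le_iff₀ hM1]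
          nlinarith [sq_nonneg ε, Nat.cast_nonneg (α := ℝ) M, mul_nonneg (sq_nonneg ε) (mul_nonneg (Nat.cast_nonneg (α := ℝ) M) (Nat.cast_nonneg (α := ℝ) M))]
      _ = ε := Real.sqrt_sq hε.le

/-- Cutoff profile: `2` near the endpoints of `[0,1]`, `0` on `[1/4,3/4]`. -/
def phi (t : ℝ) : ℝ := max 0 (max (2 - 8*t) (8*t - 6))

lemma phi_lip : LipschitzWith 8 phi := by
  have h1 : LipschitzWith 8 (fun t : ℝ => 2 - 8*t) := by
    refine LipschitzWith.of_dist_le_mul fun a b => ?_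
    rw [Real.dist_eq, Real.dist_eq]
    have : (2 - 8*a) - (2 - 8*b) = -(8*(a - b)) := by ring
    rw [this, abs_neg, abs_mul]
    simp [abs_of_nonneg]
  have h2 : LipschitzWith 8 (fun t : ℝ => 8*t - 6) := by
    refine LipschitzWith.of_dist_le_mul fun a b => ?_
    rw [Real.dist_eq, Real.dist_eq]
    have : (8*a - 6) - (8*b - 6) = 8*(a - b) := by ring
    rw [this, abs_mul]
    simp [abs_of_nonneg]
  have := (h1.max h2).const_max 0
  rw [max_self] at this
  exact this

lemma phi_nonneg (t : ℝ) : 0 ≤ phi t := le_max_left _ _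

lemma phi_zero : phi 0 = 2 := by norm_num [phi]

lemma phi_one : phi 1 = 2 := by norm_num [phi]

lemma phi_eq_zero {t : ℝ} (h1 : 1/4 ≤ t) (h2 : t ≤ 3/4) : phi t = 0 := by
  have : (2 - 8*t) ≤ 0 := by linarith
  have : (8*t - 6) ≤ 0 := by linarith
  simp only [phi]
  rw [max_eq_left (by rw [max_le_iff]; constructor <;> linarith)]

/-- The cutoff function on the cube. -/
def chi (y : Fin n → I) : ℝ := min 1 (∑ i, phi (y i))

lemma coord_lip (i : Fin n) : LipschitzWith 1 (fun y : Fin n → I => (y i : ℝ)) := by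
  refine LipschitzWith.of_dist_le_mul fun a b => ?_
  rw [NNReal.coe_one, one_mul]
  calc dist ((a i : ℝ)) ((b i : ℝ)) = dist (a i) (b i) := (Subtype.dist_eq (a i) (b i)).symm
    _ ≤ dist a b := dist_le_pi_dist a b i

lemma chi_lip : LipschitzWith (8 * n) (chi (n := n)) := by
  have hsum : LipschitzWith (8 * n) (fun y : Fin n → I => ∑ i, phi (y i)) := by
    refine LipschitzWith.of_dist_le_mul fun y z => ?_
    rw [Real.dist_eq]
    calc |∑ i, phi (y i) - ∑ i, phi (z i)| = |∑ i, (phi (y i) - phi (z i))| := by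
          rw [Finset.sum_sub_distrib]
      _ ≤ ∑ i, |phi (y i) - phi (z i)| := Finset.abs_sum_le_sum_abs _ _
      _ ≤ ∑ _i : Fin n, 8 * dist y z := by
          refine Finset.sum_le_sum fun i _ => ?_
          have h1 := phi_lip.dist_le_mul (y i : ℝ) (z i : ℝ)
          simp only [Real.dist_eq] at h1
          refine h1.trans ?_
          have h2 := (coord_lip i).dist_le_mul y z
          rw [NNReal.coe_one, one_mul, Real.dist_eq] at h2
          push_cast
          nlinarith [dist_nonneg (x := y) (y := z)]
      _ = ((8 * n : ℝ≥0) : ℝ) * dist y z := by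
          rw [Finset.sum_const, Finset.card_univ, Fintype.card_fin, nsmul_eq_mul]
          push_cast; ring
  exact hsum.const_min 1

lemma chi_nonneg (y : Fin n → I) : 0 ≤ chi y :=
  le_min zero_le_one (Finset.sum_nonneg fun i _ => phi_nonneg _)

lemma chi_le_one (y : Fin n → I) : chi y ≤ 1 := min_le_left _ _

lemma chi_eq_one {y : Fin n → I} (i : Fin n) (h : y i = 0 ∨ y i = 1) : chi y = 1 := by
  have hphi : phi (y i) = 2 := by
    rcases h with h | h <;> rw [h] <;> simp [phi_zero, phi_one]
  have hsum : (2:ℝ) ≤ ∑ i, phi (y i) := by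
    calc (2:ℝ) = phi (y i) := hphi.symm
      _ ≤ ∑ i, phi (y i) :=
        Finset.single_le_sum (fun j _ => phi_nonneg ((y j : ℝ))) (Finset.mem_univ i)
  exact min_eq_left (by linarith)

lemma chi_ne_zero {y : Fin n → I} (h : chi y ≠ 0) :
    ∃ i, (y i : ℝ) < 1/4 ∨ 3/4 < (y i : ℝ) := by
  by_contra hc
  push_neg at hc
  refine h ?_
  have : ∀ i : Fin n, phi (y i) = 0 := fun i => phi_eq_zero (hc i).1 (hc i).2
  simp [chi, Finset.sum_congr rfl fun i _ => this i]

variable {α E' : Type*} [PseudoMetricSpace α] [NormedAddCommGroup E'] [NormedSpace ℝ E']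

lemma lip_smul {f : α → ℝ} {v : α → E'} {cf cv : ℝ≥0}
    (hf : LipschitzWith cf f) (hv : LipschitzWith cv v)
    (hfb : ∀ y, |f y| ≤ 1) (hvb : ∀ y, ‖v y‖ ≤ 3) :
    LipschitzWith (cv + 3 * cf) (fun y => f y • v y) := by
  refine LipschitzWith.of_dist_le_mul fun y z => ?_
  rw [dist_eq_norm]
  have key : f y • v y - f z • v z = f y • (v y - v z) + (f y - f z) • v z := by
    rw [smul_sub, sub_smul]; abel
  rw [key]
  have h1 : ‖f y • (v y - v z)‖ ≤ 1 * (cv * dist y z) := by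
    rw [norm_smul, Real.norm_eq_abs]
    have := hv.dist_le_mul y z
    rw [dist_eq_norm] at this
    have hn : (0:ℝ) ≤ ‖v y - v z‖ := norm_nonneg _
    nlinarith [hfb y, abs_nonneg (f y)]
  have h2 : ‖(f y - f z) • v z‖ ≤ (cf * dist y z) * 3 := by
    rw [norm_smul, Real.norm_eq_abs]
    have := hf.dist_le_mul y z
    rw [Real.dist_eq] at this
    have := hvb z
    nlinarith [abs_nonneg (f y - f z), norm_nonneg (v z)]
  calc ‖f y • (v y - v z) + (f y - f z) • v z‖
      ≤ ‖f y • (v y - v z)‖ + ‖(f y - f z) • v z‖ := norm_add_le _ _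
    _ ≤ 1 * (cv * dist y z) + (cf * dist y z) * 3 := add_le_add h1 h2
    _ = ((cv + 3 * cf : ℝ≥0) : ℝ) * dist y z := by push_cast; ring

lemma normalize_dist_le {a b : E'} (ha : (1:ℝ)/2 ≤ ‖a‖) (hb : (1:ℝ)/2 ≤ ‖b‖) :
    ‖‖a‖⁻¹ • a - ‖b‖⁻¹ • b‖ ≤ 4 * ‖a - b‖ := by
  have ha0 : (0:ℝ) < ‖a‖ := by linarith
  have hb0 : (0:ℝ) < ‖b‖ := by linarith
  have key : ‖a‖⁻¹ • a - ‖b‖⁻¹ • b = ‖a‖⁻¹ • (a - b) + (‖a‖⁻¹ - ‖b‖⁻¹) • b := by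
    rw [smul_sub, sub_smul]; abel
  rw [key]
  have h1 : ‖‖a‖⁻¹ • (a - b)‖ ≤ 2 * ‖a - b‖ := by
    rw [norm_smul, Real.norm_eq_abs, abs_of_pos (inv_pos.2 ha0)]
    have : ‖a‖⁻¹ ≤ 2 := by
      rw [inv_le_comm₀ ha0 (by norm_num)]; linarith
    nlinarith [norm_nonneg (a - b)]
  have h2 : ‖(‖a‖⁻¹ - ‖b‖⁻¹) • b‖ ≤ 2 * ‖a - b‖ := by
    rw [norm_smul, Real.norm_eq_abs]
    have hd : ‖a‖⁻¹ - ‖b‖⁻¹ = (‖b‖ - ‖a‖) / (‖a‖ * ‖b‖) := by field_simp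
    rw [hd, abs_div, abs_of_pos (mul_pos ha0 hb0)]
    have habs : |‖b‖ - ‖a‖| ≤ ‖a - b‖ := by
      rw [abs_sub_comm]
      exact abs_norm_sub_norm_le a b
    rw [div_mul_eq_mul_div, div_le_iff₀ (mul_pos ha0 hb0)]
    have h3 : |‖b‖ - ‖a‖| * ‖b‖ ≤ ‖a - b‖ * ‖b‖ := mul_le_mul_of_nonneg_right habs hb0.le
    nlinarith [mul_nonneg (norm_nonneg (a - b)) hb0.le]
  calc ‖‖a‖⁻¹ • (a - b) + (‖a‖⁻¹ - ‖b‖⁻¹) • b‖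
      ≤ ‖‖a‖⁻¹ • (a - b)‖ + ‖(‖a‖⁻¹ - ‖b‖⁻¹) • b‖ := norm_add_le _ _
    _ ≤ 2 * ‖a - b‖ + 2 * ‖a - b‖ := add_le_add h1 h2
    _ = 4 * ‖a - b‖ := by ring

lemma lip_normalize {g : α → E'} {c : ℝ≥0} (hg : LipschitzWith c g)
    (hb : ∀ y, (1:ℝ)/2 ≤ ‖g y‖) :
    LipschitzWith (4 * c) (fun y => ‖g y‖⁻¹ • g y) := by
  refine LipschitzWith.of_dist_le_mul fun y z => ?_
  rw [dist_eq_norm]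
  have h1 := normalize_dist_le (hb y) (hb z)
  have h2 := hg.dist_le_mul y z
  rw [dist_eq_norm] at h2
  calc ‖‖g y‖⁻¹ • g y - ‖g z‖⁻¹ • g z‖ ≤ 4 * ‖g y - g z‖ := h1
    _ ≤ 4 * (c * dist y z) := by nlinarith
    _ = ((4 * c : ℝ≥0) : ℝ) * dist y z := by push_cast; ring

lemma cube_isometry (n : ℕ) : Isometry (fun (y : Fin n → I) (i : Fin n) => (y i : ℝ)) := by
  intro y z
  rfl

lemma dimH_cube_le (n : ℕ) : dimH (univ : Set (Fin n → I)) ≤ n := by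
  rw [← (cube_isometry n).dimH_image univ]
  calc dimH ((fun (y : Fin n → I) (i : Fin n) => (y i : ℝ)) '' univ)
      ≤ dimH (univ : Set (Fin n → ℝ)) := dimH_mono (subset_univ _)
    _ = n := Real.dimH_univ_pi_fin n

lemma proj_lip (m : ℕ) : LipschitzWith 1
    (fun (v : EuclideanSpace ℝ (Fin (m+1))) =>
      (WithLp.equiv 2 (Fin m → ℝ)).symm (fun i => v i.castSucc)) := by
  refine LipschitzWith.of_dist_le_mul fun v w => ?_
  rw [NNReal.coe_one, one_mul, EuclideanSpace.dist_eq, EuclideanSpace.dist_eq]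
  refine Real.sqrt_le_sqrt ?_
  rw [Fin.sum_univ_castSucc (f := fun i => dist (v i) (w i) ^ 2)]
  have : (0:ℝ) ≤ dist (v (Fin.last m)) (w (Fin.last m)) ^ 2 := sq_nonneg _
  simp only [WithLp.equiv_symm_apply, PiLp.toLp_apply]
  linarith [Finset.sum_nonneg (fun (i : Fin m) (_ : i ∈ Finset.univ) =>
    sq_nonneg (dist (v i.castSucc) (w i.castSucc)))]

lemma ball_subset_proj_sphere (m : ℕ) :
    ball (0 : EuclideanSpace ℝ (Fin m)) 1 ⊆
      (fun (v : EuclideanSpace ℝ (Fin (m+1))) =>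
        (WithLp.equiv 2 (Fin m → ℝ)).symm (fun i => v i.castSucc)) ''
        (sphere (0 : EuclideanSpace ℝ (Fin (m+1))) 1) := by
  intro u hu
  rw [mem_ball_zero_iff] at hu
  have hu2 : ‖u‖ ^ 2 ≤ 1 := by nlinarith [norm_nonneg u]
  set v : EuclideanSpace ℝ (Fin (m+1)) :=
    (WithLp.equiv 2 (Fin (m+1) → ℝ)).symm
      (fun j => Fin.lastCases (Real.sqrt (1 - ‖u‖^2)) (fun i => u i) j) with hv
  have husum : ‖u‖ ^ 2 = ∑ i : Fin m, ‖u i‖ ^ 2 := by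
    rw [EuclideanSpace.norm_eq, Real.sq_sqrt (Finset.sum_nonneg fun i _ => sq_nonneg _)]
  have hvnorm : ‖v‖ = 1 := by
    rw [EuclideanSpace.norm_eq]
    have : ∑ j : Fin (m+1), ‖v j‖ ^ 2 = 1 := by
      rw [Fin.sum_univ_castSucc (f := fun j => ‖v j‖ ^ 2)]
      have h1 : ∀ i : Fin m, v i.castSucc = u i := by
        intro i
        simp [hv, WithLp.equiv_symm_apply, PiLp.toLp_apply, Fin.lastCases_castSucc]
      have h2 : v (Fin.last m) = Real.sqrt (1 - ‖u‖^2) := by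
        simp [hv, WithLp.equiv_symm_apply, PiLp.toLp_apply, Fin.lastCases_last]
      rw [h2]
      have h3 : ∑ i : Fin m, ‖v i.castSucc‖ ^ 2 = ‖u‖^2 := by
        rw [husum]; exact Finset.sum_congr rfl fun i _ => by rw [h1 i]
      rw [h3, Real.norm_eq_abs, sq_abs, Real.sq_sqrt (by linarith)]
      ring
    rw [this, Real.sqrt_one]
  refine ⟨v, ?_, ?_⟩
  · rwa [mem_sphere_zero_iff_norm]
  · ext i
    show v i.castSucc = u i
    simp [hv, WithLp.equiv_symm_apply, PiLp.toLp_apply, Fin.lastCases_castSucc]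

lemma not_surj {n m : ℕ} (h2 : n < m)
    {k : (Fin n → I) → sphere (0 : EuclideanSpace ℝ (Fin (m+1))) 1} {c : ℝ≥0}
    (hk : LipschitzWith c (fun y => (k y : EuclideanSpace ℝ (Fin (m+1))))) :
    ∃ p : sphere (0 : EuclideanSpace ℝ (Fin (m+1))) 1, ∀ y, k y ≠ p := by
  by_contra h
  push_neg at h
  have hsub : (sphere (0 : EuclideanSpace ℝ (Fin (m+1))) 1 : Set _) ⊆
      Set.range (fun y => (k y : EuclideanSpace ℝ (Fin (m+1)))) := by
    intro v hv
    obtain ⟨y, hy⟩ := h ⟨v, hv⟩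
    exact ⟨y, congrArg Subtype.val hy⟩
  have hm : (m : ℝ≥0∞) ≤ dimH (sphere (0 : EuclideanSpace ℝ (Fin (m+1))) 1 : Set _) := by
    have hb : dimH (ball (0 : EuclideanSpace ℝ (Fin m)) 1) = m := by
      rw [Real.dimH_of_mem_nhds (ball_mem_nhds (0 : EuclideanSpace ℝ (Fin m)) one_pos)]
      simp [finrank_euclideanSpace_fin]
    calc (m : ℝ≥0∞) = dimH (ball (0 : EuclideanSpace ℝ (Fin m)) 1) := hb.symm
      _ ≤ dimH ((fun (v : EuclideanSpace ℝ (Fin (m+1))) =>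
            (WithLp.equiv 2 (Fin m → ℝ)).symm (fun i => v i.castSucc)) ''
            (sphere (0 : EuclideanSpace ℝ (Fin (m+1))) 1)) :=
          dimH_mono (ball_subset_proj_sphere m)
      _ ≤ dimH (sphere (0 : EuclideanSpace ℝ (Fin (m+1))) 1 : Set _) :=
          (proj_lip m).dimH_image_le _
  have hn : dimH (sphere (0 : EuclideanSpace ℝ (Fin (m+1))) 1 : Set _) ≤ n := by
    calc dimH (sphere (0 : EuclideanSpace ℝ (Fin (m+1))) 1 : Set _)
        ≤ dimH (Set.range (fun y => (k y : EuclideanSpace ℝ (Fin (m+1))))) := dimH_mono hsub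
      _ = dimH ((fun y => (k y : EuclideanSpace ℝ (Fin (m+1)))) '' univ) := by
          rw [Set.image_univ]
      _ ≤ dimH (univ : Set (Fin n → I)) := hk.dimH_image_le _
      _ ≤ n := dimH_cube_le n
  have : (m : ℝ≥0∞) ≤ n := hm.trans hn
  rw [Nat.cast_le] at this
  omega

lemma convex_norm_lb {s : ℝ} (hs0 : 0 ≤ s) (hs1 : s ≤ 1) (a b : EuclideanSpace ℝ (Fin (m+1)))
    (ha : ‖a‖ = 1) (hb : ‖b‖ = 1) (hab : ‖a - b‖ ≤ 1) :
    1/2 ≤ ‖(1 - s) • a + s • b‖ := by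
  rcases le_or_gt s (1/2) with h | h
  · have key : (1 - s) • a + s • b = a + s • (b - a) := by module
    rw [key]
    have h1 : ‖s • (b - a)‖ ≤ s := by
      rw [norm_smul, Real.norm_eq_abs, abs_of_nonneg hs0]
      have : ‖b - a‖ ≤ 1 := by rwa [norm_sub_rev]
      nlinarith
    have h2 := norm_add_le (a + s • (b - a)) (-(s • (b - a)))
    simp only [add_neg_cancel_right, norm_neg] at h2
    rw [ha] at h2
    linarith
  · have key : (1 - s) • a + s • b = b + (1 - s) • (a - b) := by module
    rw [key]
    have h1 : ‖(1 - s) • (a - b)‖ ≤ 1 - s := by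
      rw [norm_smul, Real.norm_eq_abs, abs_of_nonneg (by linarith)]
      nlinarith
    have h2 := norm_add_le (b + (1 - s) • (a - b)) (-((1 - s) • (a - b)))
    simp only [add_neg_cancel_right, norm_neg] at h2
    rw [hb] at h2
    linarith

lemma homotopic_of_close {x : sphere (0 : EuclideanSpace ℝ (Fin (m+1))) 1}
    (f g : GenLoop (Fin n) (sphere (0 : EuclideanSpace ℝ (Fin (m+1))) 1) x)
    (hfg : ∀ y, ‖(f y : EuclideanSpace ℝ (Fin (m+1))) - (g y : EuclideanSpace ℝ (Fin (m+1)))‖ ≤ 1) :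
    GenLoop.Homotopic f g := by
  set w : I × (Fin n → I) → EuclideanSpace ℝ (Fin (m+1)) :=
    fun p => (1 - (p.1 : ℝ)) • ((f p.2 : EuclideanSpace ℝ (Fin (m+1))))
      + (p.1 : ℝ) • ((g p.2 : EuclideanSpace ℝ (Fin (m+1)))) with hw
  have hwlb : ∀ p, 1/2 ≤ ‖w p‖ := fun p =>
    convex_norm_lb p.1.2.1 p.1.2.2 _ _ (norm_eq_of_mem_sphere (f p.2))
      (norm_eq_of_mem_sphere (g p.2)) (hfg p.2)
  have hwnz : ∀ p, w p ≠ 0 := fun p => by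
    intro h0
    have := hwlb p
    rw [h0, norm_zero] at this
    linarith
  have hwc : Continuous w := by
    apply Continuous.add
    · exact (continuous_const.sub (continuous_subtype_val.comp continuous_fst)).smul
        (continuous_subtype_val.comp (f.1.continuous.comp continuous_snd))
    · exact (continuous_subtype_val.comp continuous_fst).smul
        (continuous_subtype_val.comp (g.1.continuous.comp continuous_snd))
  refine ⟨⟨⟨⟨fun p => ⟨‖w p‖⁻¹ • w p, ?_⟩, ?_⟩, ?_, ?_⟩, ?_⟩⟩
  · rw [mem_sphere_zero_iff_norm]
    exact norm_smul_inv_norm (𝕜 := ℝ) (hwnz p)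
  · exact ((hwc.norm.inv₀ fun p => by
      have := hwlb p; positivity).smul hwc).subtype_mk _
  · intro y
    refine Subtype.ext ?_
    show ‖w (0, y)‖⁻¹ • w (0, y) = (f y : EuclideanSpace ℝ (Fin (m+1)))
    have h0 : w (0, y) = (f y : EuclideanSpace ℝ (Fin (m+1))) := by
      simp [hw]
    rw [h0, norm_eq_of_mem_sphere (f y), inv_one, one_smul]
  · intro y
    refine Subtype.ext ?_
    show ‖w (1, y)‖⁻¹ • w (1, y) = (g y : EuclideanSpace ℝ (Fin (m+1)))
    have h0 : w (1, y) = (g y : EuclideanSpace ℝ (Fin (m+1))) := by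
      simp [hw]
    rw [h0, norm_eq_of_mem_sphere (g y), inv_one, one_smul]
  · intro t y hy
    have hfy : f.1 y = x := f.2 y hy
    have hgy : g.1 y = x := g.2 y hy
    refine Subtype.ext ?_
    show ‖w (t, y)‖⁻¹ • w (t, y) = ((f.1 y : sphere _ _) : EuclideanSpace ℝ (Fin (m+1)))
    have h0 : w (t, y) = ((x : sphere (0 : EuclideanSpace ℝ (Fin (m+1))) 1) : EuclideanSpace ℝ (Fin (m+1))) := by
      show (1 - (t : ℝ)) • ((f.1 y : sphere _ _) : EuclideanSpace ℝ (Fin (m+1)))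
          + (t : ℝ) • ((g.1 y : sphere _ _) : EuclideanSpace ℝ (Fin (m+1))) = _
      rw [hfy, hgy, ← add_smul]
      simp
    rw [h0, hfy, norm_eq_of_mem_sphere x, inv_one, one_smul]

lemma homotopic_const_of_misses {x : sphere (0 : EuclideanSpace ℝ (Fin (m+1))) 1}
    (p : sphere (0 : EuclideanSpace ℝ (Fin (m+1))) 1)
    (f : GenLoop (Fin n) (sphere (0 : EuclideanSpace ℝ (Fin (m+1))) 1) x)
    (hp : ∀ y, f y ≠ p) (hxp : x ≠ p) : GenLoop.Homotopic f GenLoop.const := by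
  set sg := stereographic (E := EuclideanSpace ℝ (Fin (m+1))) (norm_eq_of_mem_sphere p) with hsg
  have hsrc : ∀ z : sphere (0 : EuclideanSpace ℝ (Fin (m+1))) 1, z ≠ p → z ∈ sg.source := by
    intro z hz
    rw [hsg, stereographic_source]
    simp only [Set.mem_compl_iff, Set.mem_singleton_iff, Subtype.coe_eta]
    exact hz
  have hsgsymm : Continuous sg.symm := by
    rw [← continuousOn_univ]
    have := sg.symm.continuousOn
    rwa [show sg.symm.source = univ from by rw [OpenPartialHomeomorph.symm_source, hsg, stereographic_target]] at this
  have hsgf : Continuous fun y => sg (f y) :=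
    sg.continuousOn.comp_continuous f.1.continuous fun y => hsrc (f y) (hp y)
  refine ⟨⟨⟨⟨fun q => sg.symm ((1 - (q.1 : ℝ)) • sg (f q.2) + (q.1 : ℝ) • sg x), ?_⟩, ?_, ?_⟩, ?_⟩⟩
  · apply hsgsymm.comp
    apply Continuous.add
    · exact (continuous_const.sub (continuous_subtype_val.comp continuous_fst)).smul
        (hsgf.comp continuous_snd)
    · exact (continuous_subtype_val.comp continuous_fst).smul continuous_const
  · intro y
    show sg.symm _ = f y
    have : ((1:ℝ) - ((0:I) : ℝ)) • sg (f y) + ((0:I) : ℝ) • sg x = sg (f y) := by simp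
    rw [this]
    exact sg.left_inv (hsrc (f y) (hp y))
  · intro y
    show sg.symm _ = GenLoop.const y
    have : ((1:ℝ) - ((1:I) : ℝ)) • sg (f y) + ((1:I) : ℝ) • sg x = sg x := by simp
    rw [this]
    exact sg.left_inv (hsrc x hxp)
  · intro t y hy
    have hfy : f y = x := f.2 y hy
    show sg.symm ((1 - (t : ℝ)) • sg (f y) + (t : ℝ) • sg x) = f y
    rw [hfy, ← add_smul]
    norm_num
    exact sg.left_inv (hsrc x hxp)

/-- The radial squash map on the cube at time `s`. -/
def qfun (s : I) (y : Fin n → I) : Fin n → I :=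
  fun i => Set.projIcc (0:ℝ) 1 zero_le_one ((1 + (s:ℝ)) * (y i : ℝ) - (s:ℝ)/2)

lemma qfun_continuous : Continuous fun p : I × (Fin n → I) => qfun p.1 p.2 := by
  refine continuous_pi fun i => ?_
  apply continuous_projIcc.comp
  have h1 : Continuous fun p : I × (Fin n → I) => (p.1 : ℝ) := continuous_subtype_val.comp continuous_fst
  have h2 : Continuous fun p : I × (Fin n → I) => (p.2 i : ℝ) :=
    continuous_subtype_val.comp ((continuous_apply i).comp continuous_snd)
  continuity

lemma qfun_zero (y : Fin n → I) : qfun 0 y = y := by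
  funext i
  simp only [qfun]
  rw [show ((1:ℝ) + ((0:I):ℝ)) * (y i : ℝ) - ((0:I):ℝ)/2 = (y i : ℝ) by norm_num]
  exact projIcc_of_mem _ (y i).2 ▸ rfl

lemma qfun_boundary {s : I} {y : Fin n → I} {i : Fin n} (h : y i = 0 ∨ y i = 1) :
    (qfun s y) i = 0 ∨ (qfun s y) i = 1 := by
  rcases h with h | h
  · left
    simp only [qfun, h]
    rw [show ((1:ℝ) + (s:ℝ)) * (((0:I)):ℝ) - (s:ℝ)/2 = -((s:ℝ)/2) by norm_num]
    rw [projIcc_of_le_left _ (by nlinarith [s.2.1] : -((s:ℝ)/2) ≤ 0)]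
    rfl
  · right
    simp only [qfun, h]
    rw [show ((1:ℝ) + (s:ℝ)) * (((1:I)):ℝ) - (s:ℝ)/2 = 1 + (s:ℝ)/2 by push_cast; ring]
    rw [projIcc_of_right_le _ (by nlinarith [s.2.1] : (1:ℝ) ≤ 1 + (s:ℝ)/2)]
    rfl

lemma qfun_one_left {y : Fin n → I} {i : Fin n} (h : (y i : ℝ) < 1/4) : (qfun 1 y) i = 0 := by
  simp only [qfun]
  rw [projIcc_of_le_left _ (by push_cast; nlinarith [(y i).2.1] : (1 + ((1:I):ℝ)) * (y i : ℝ) - ((1:I):ℝ)/2 ≤ 0)]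
  rfl

lemma qfun_one_right {y : Fin n → I} {i : Fin n} (h : 3/4 < (y i : ℝ)) : (qfun 1 y) i = 1 := by
  simp only [qfun]
  rw [projIcc_of_right_le _ (by push_cast; nlinarith [(y i).2.2] : (1:ℝ) ≤ (1 + ((1:I):ℝ)) * (y i : ℝ) - ((1:I):ℝ)/2)]
  rfl

lemma qfun_mem_boundary {s : I} {y : Fin n → I} (h : y ∈ Cube.boundary (Fin n)) :
    qfun s y ∈ Cube.boundary (Fin n) := by
  obtain ⟨i, hi⟩ := h
  exact ⟨i, qfun_boundary hi⟩

/-- Squash homotopy: any generalized loop is homotopic rel boundary to its squash. -/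
lemma homotopic_squash {X : Type*} [TopologicalSpace X] {x : X}
    (f : GenLoop (Fin n) X x) :
    GenLoop.Homotopic f
      ⟨f.1.comp ⟨qfun 1, qfun_continuous.comp (Continuous.prodMk_right 1)⟩,
        fun y hy => f.2 _ (qfun_mem_boundary hy)⟩ := by
  refine ⟨⟨⟨⟨fun p => f.1 (qfun p.1 p.2), f.1.continuous.comp qfun_continuous⟩, ?_, ?_⟩, ?_⟩⟩
  · intro y
    show f.1 (qfun 0 y) = f.1 y
    rw [qfun_zero]
  · intro y
    rfl
  · intro t y hy
    show f.1 (qfun t y) = f.1 y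
    rw [f.2 _ (qfun_mem_boundary hy), f.2 _ hy]

theorem main_homotopic (h1 : 1 ≤ n) (h2 : n < m)
    (x : sphere (0 : EuclideanSpace ℝ (Fin (m + 1))) 1)
    (f : GenLoop (Fin n) (sphere (0 : EuclideanSpace ℝ (Fin (m+1))) 1) x) :
    GenLoop.Homotopic f GenLoop.const := by
  classical
  set F : GenLoop (Fin n) (sphere (0 : EuclideanSpace ℝ (Fin (m+1))) 1) x :=
    ⟨f.1.comp ⟨qfun 1, qfun_continuous.comp (Continuous.prodMk_right 1)⟩,
      fun y hy => f.2 _ (qfun_mem_boundary hy)⟩ with hFdef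
  have hsq : GenLoop.Homotopic f F := homotopic_squash f
  have hFx : ∀ y : Fin n → I, (∃ i, (y i : ℝ) < 1/4 ∨ 3/4 < (y i : ℝ)) → F.1 y = x := by
    rintro y ⟨i, hi⟩
    have : qfun 1 y ∈ Cube.boundary (Fin n) := by
      rcases hi with hi | hi
      · exact ⟨i, Or.inl (qfun_one_left hi)⟩
      · exact ⟨i, Or.inr (qfun_one_right hi)⟩
    exact f.2 _ this
  -- Lipschitz approximation
  obtain ⟨g0, ⟨c0, hc0⟩, hg0⟩ := exists_lip_approx_eucl
    ⟨fun y => ((F.1 y : sphere (0 : EuclideanSpace ℝ (Fin (m+1))) 1) : EuclideanSpace ℝ (Fin (m+1))),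
      continuous_subtype_val.comp F.1.continuous⟩ (by norm_num : (0:ℝ) < 1/4)
  simp only [ContinuousMap.coe_mk] at hg0
  set g : (Fin n → I) → EuclideanSpace ℝ (Fin (m+1)) :=
    fun y => g0 y + chi y • (((x : EuclideanSpace ℝ (Fin (m+1)))) - g0 y) with hgdef
  have hnormF : ∀ y, ‖((F.1 y : sphere _ _) : EuclideanSpace ℝ (Fin (m+1)))‖ = 1 :=
    fun y => norm_eq_of_mem_sphere (F.1 y)
  have hg0b : ∀ y, ‖g0 y‖ ≤ 5/4 := by
    intro y
    have h := hg0 y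
    have h2' := norm_sub_norm_le (g0 y) ((F.1 y : sphere _ _) : EuclideanSpace ℝ (Fin (m+1)))
    rw [hnormF y] at h2'
    linarith
  have hvb : ∀ y, ‖(x : EuclideanSpace ℝ (Fin (m+1))) - g0 y‖ ≤ 3 := by
    intro y
    have := norm_sub_le (x : EuclideanSpace ℝ (Fin (m+1))) (g0 y)
    have hx : ‖(x : EuclideanSpace ℝ (Fin (m+1)))‖ = 1 := norm_eq_of_mem_sphere x
    linarith [hg0b y]
  have hfb : ∀ y : Fin n → I, |chi y| ≤ 1 := fun y =>
    abs_le.2 ⟨by linarith [chi_nonneg y], chi_le_one y⟩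
  have hglip : LipschitzWith (c0 + (c0 + 3 * (8 * n))) g :=
    hc0.add (lip_smul chi_lip ((LipschitzWith.const _).sub hc0 |>.weaken (by simp)) hfb hvb)
  have herr : ∀ y, ‖g y - ((F.1 y : sphere _ _) : EuclideanSpace ℝ (Fin (m+1)))‖ ≤ 1/4 := by
    intro y
    by_cases hchi : chi y = 0
    · have : g y = g0 y := by simp [hgdef, hchi]
      rw [this]
      exact hg0 y
    · have hFy : F.1 y = x := hFx y (chi_ne_zero hchi)
      have key : g y - ((F.1 y : sphere _ _) : EuclideanSpace ℝ (Fin (m+1)))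
          = (1 - chi y) • (g0 y - ((F.1 y : sphere _ _) : EuclideanSpace ℝ (Fin (m+1)))) := by
        rw [hgdef]
        simp only [hFy]
        module
      rw [key, norm_smul, Real.norm_eq_abs, abs_of_nonneg (by linarith [chi_le_one y])]
      have h := hg0 y
      rw [norm_sub_rev] at h
      rw [norm_sub_rev]
      nlinarith [chi_nonneg y, norm_nonneg (((F.1 y : sphere _ _) : EuclideanSpace ℝ (Fin (m+1))) - g0 y)]
  have hnormg : ∀ y, 3/4 ≤ ‖g y‖ := by
    intro y
    have h := herr y
    have h2' := norm_sub_norm_le (((F.1 y : sphere _ _) : EuclideanSpace ℝ (Fin (m+1)))) (g y)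
    rw [hnormF y, norm_sub_rev] at h2'
    linarith
  have hgne : ∀ y, g y ≠ 0 := by
    intro y h0
    have := hnormg y
    rw [h0, norm_zero] at this
    linarith
  have kmem : ∀ y, ‖g y‖⁻¹ • g y ∈ sphere (0 : EuclideanSpace ℝ (Fin (m+1))) 1 := by
    intro y
    rw [mem_sphere_zero_iff_norm]
    exact norm_smul_inv_norm (𝕜 := ℝ) (hgne y)
  have kcont : Continuous fun y => (⟨‖g y‖⁻¹ • g y, kmem y⟩ :
      sphere (0 : EuclideanSpace ℝ (Fin (m+1))) 1) := by
    have gc : Continuous g := hglip.continuous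
    exact ((gc.norm.inv₀ fun y => by
      have := hnormg y; positivity).smul gc).subtype_mk _
  have kbd : ∀ y ∈ Cube.boundary (Fin n), (⟨‖g y‖⁻¹ • g y, kmem y⟩ :
      sphere (0 : EuclideanSpace ℝ (Fin (m+1))) 1) = x := by
    intro y hy
    obtain ⟨i, hi⟩ := hy
    have hchi : chi y = 1 := chi_eq_one i hi
    have hgx : g y = (x : EuclideanSpace ℝ (Fin (m+1))) := by
      rw [hgdef]
      simp [hchi]
    refine Subtype.ext ?_
    show ‖g y‖⁻¹ • g y = (x : EuclideanSpace ℝ (Fin (m+1)))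
    rw [hgx, norm_eq_of_mem_sphere x, inv_one, one_smul]
  set K : GenLoop (Fin n) (sphere (0 : EuclideanSpace ℝ (Fin (m+1))) 1) x :=
    ⟨⟨fun y => ⟨‖g y‖⁻¹ • g y, kmem y⟩, kcont⟩, kbd⟩ with hKdef
  have hclose : ∀ y, ‖((F y : sphere _ _) : EuclideanSpace ℝ (Fin (m+1)))
      - ((K y : sphere _ _) : EuclideanSpace ℝ (Fin (m+1)))‖ ≤ 1 := by
    intro y
    have hKy : ((K y : sphere _ _) : EuclideanSpace ℝ (Fin (m+1))) = ‖g y‖⁻¹ • g y := rfl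
    have hgK : ‖g y - ‖g y‖⁻¹ • g y‖ ≤ 1/4 := by
      have key : g y - ‖g y‖⁻¹ • g y = (1 - ‖g y‖⁻¹) • g y := by
        rw [sub_smul, one_smul]
      rw [key, norm_smul, Real.norm_eq_abs]
      have hgn : (0:ℝ) < ‖g y‖ := by linarith [hnormg y]
      have habs : |1 - ‖g y‖⁻¹| * ‖g y‖ = |‖g y‖ - 1| := by
        rw [← abs_of_pos hgn, ← abs_mul]
        congr 1
        field_simp
        rw [abs_of_pos hgn]; ring
      rw [habs]
      have : |‖g y‖ - 1| ≤ 1/4 := by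
        have h := herr y
        have h2' := abs_norm_sub_norm_le (g y) (((F.1 y : sphere _ _) : EuclideanSpace ℝ (Fin (m+1))))
        rw [hnormF y] at h2'
        exact h2'.trans h
      linarith
    have h := herr y
    rw [norm_sub_rev] at h
    have := norm_sub_le_norm_sub_add_norm_sub
      (((F y : sphere _ _) : EuclideanSpace ℝ (Fin (m+1)))) (g y) (‖g y‖⁻¹ • g y)
    rw [hKy]
    calc ‖((F y : sphere _ _) : EuclideanSpace ℝ (Fin (m+1))) - ‖g y‖⁻¹ • g y‖
        ≤ ‖((F y : sphere _ _) : EuclideanSpace ℝ (Fin (m+1))) - g y‖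
          + ‖g y - ‖g y‖⁻¹ • g y‖ := by
          calc ‖((F y : sphere _ _) : EuclideanSpace ℝ (Fin (m+1))) - ‖g y‖⁻¹ • g y‖
              = ‖(((F y : sphere _ _) : EuclideanSpace ℝ (Fin (m+1))) - g y)
                + (g y - ‖g y‖⁻¹ • g y)‖ := by rw [sub_add_sub_cancel]
            _ ≤ _ := norm_add_le _ _
      _ ≤ 1/4 + 1/4 := add_le_add h hgK
      _ ≤ 1 := by norm_num
  have hFK : GenLoop.Homotopic F K := homotopic_of_close F K hclose
  have hklip : LipschitzWith (4 * (c0 + (c0 + 3 * (8 * n))))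
      (fun y => ((K y : sphere _ _) : EuclideanSpace ℝ (Fin (m+1)))) :=
    lip_normalize hglip fun y => by linarith [hnormg y]
  obtain ⟨p, hpk⟩ := not_surj h2 hklip
  have hxp : x ≠ p := by
    have hy0 : (fun _ : Fin n => (0:I)) ∈ Cube.boundary (Fin n) := ⟨⟨0, h1⟩, Or.inl rfl⟩
    have hKx : K (fun _ => (0:I)) = x := kbd _ hy0
    intro he
    exact hpk (fun _ => (0:I)) (by rw [hKx, he])
  have hKc : GenLoop.Homotopic K GenLoop.const := homotopic_const_of_misses p K hpk hxp
  exact hsq.trans (hFK.trans hKc)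

end

end PiSphereAux

/-- For `1 ≤ n < m`, the homotopy group `πₙ(Sᵐ, x)` is trivial. -/
theorem pi_sphere_subsingleton_of_lt (n m : ℕ) (h1 : 1 ≤ n) (h2 : n < m)
    (x : sphere (0 : EuclideanSpace ℝ (Fin (m + 1))) 1) :
    Subsingleton (HomotopyGroup (Fin n) (sphere (0 : EuclideanSpace ℝ (Fin (m + 1))) 1) x) := by
  constructor
  intro a b
  refine Quotient.inductionOn₂ a b fun f g => Quotient.sound ?_
  exact (PiSphereAux.main_homotopic h1 h2 x f).trans (PiSphereAux.main_homotopic h1 h2 x g).symm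
end

section
/- All higher homotopy groups of the circle vanish: for every natural number n ≥ 2 and any basepoint x on the unit circle, the homotopy group πₙ(S¹, x) is trivial (a subsingleton). -/
open Metric Topology unitInterval Complex

noncomputable section

namespace PiNCircle


def cubeSmul {n : ℕ} (t : I) (y : Fin n → I) : Fin n → I :=
  fun i => ⟨(t : ℝ) * y i, unitInterval.mul_mem t.2 (y i).2⟩

lemma continuous_cubeSmul {n : ℕ} :
    Continuous (fun p : I × (Fin n → I) => cubeSmul p.1 p.2) := by
  refine continuous_pi fun i => Continuous.subtype_mk ?_ _
  exact (continuous_subtype_val.comp continuous_fst).mul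
    (continuous_subtype_val.comp ((continuous_apply i).comp continuous_snd))

lemma cubeSmul_zero {n : ℕ} (y : Fin n → I) : cubeSmul 0 y = fun _ => 0 := by
  funext i; exact Subtype.ext (by simp [cubeSmul])

lemma cubeSmul_one {n : ℕ} (y : Fin n → I) : cubeSmul 1 y = y := by
  funext i; exact Subtype.ext (by simp [cubeSmul])

lemma exp_sum (s : Finset ℕ) (g : ℕ → ℝ) :
    Circle.exp (∑ i ∈ s, g i) = ∏ i ∈ s, Circle.exp (g i) := by
  classical
  induction s using Finset.cons_induction with
  | empty => simp
  | cons a s ha ih => rw [Finset.sum_cons, Finset.prod_cons, Circle.exp_add, ih]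

lemma re_pos_of_dist_lt_one {z w : Circle} (h : dist z w < 1) :
    0 < ((z : ℂ) / (w : ℂ)).re := by
  have habs : ‖(z:ℂ)/(w:ℂ) - 1‖ < 1 := by
    have : ((z:ℂ)/(w:ℂ) - 1) = ((z:ℂ) - w) / w := by
      field_simp
    rw [this, norm_div, Circle.norm_coe, div_one]
    rw [← Complex.dist_eq]; exact h
  have h2 : (1 - ((z:ℂ)/(w:ℂ))).re ≤ ‖(z:ℂ)/(w:ℂ) - 1‖ := by
    calc (1 - ((z:ℂ)/(w:ℂ))).re ≤ ‖1 - (z:ℂ)/(w:ℂ)‖ := Complex.re_le_norm _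
    _ = ‖(z:ℂ)/(w:ℂ) - 1‖ := by rw [norm_sub_rev]
  have := h2.trans_lt habs
  simp only [Complex.sub_re, Complex.one_re] at this
  linarith

/-- Any continuous map from the cube to the circle lifts through `Circle.exp`. -/
lemma exists_lift {n : ℕ} (f : C(Fin n → I, Circle)) :
    ∃ L : (Fin n → I) → ℝ, Continuous L ∧ ∀ y, Circle.exp (L y) = f y := by
  have hc : Continuous (fun p : I × (Fin n → I) => f (cubeSmul p.1 p.2)) :=
    f.continuous.comp continuous_cubeSmul
  have huc := CompactSpace.uniformContinuous_of_continuous hc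
  obtain ⟨δ, hδ, hδ'⟩ := Metric.uniformContinuous_iff.1 huc 1 one_pos
  obtain ⟨N, hN⟩ := exists_nat_one_div_lt hδ
  have hMpos : (0:ℝ) < (N + 1 : ℕ) := by positivity
  have hmem : ∀ k : ℕ, k ≤ N + 1 → ((k : ℝ) / (N + 1 : ℕ) : ℝ) ∈ Set.Icc (0:ℝ) 1 := by
    intro k hk
    refine ⟨by positivity, ?_⟩
    rw [div_le_one hMpos]; exact_mod_cast hk
  let c : ℕ → I := fun k => Set.projIcc 0 1 zero_le_one ((k:ℝ) / (N + 1 : ℕ))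
  have hcval : ∀ k : ℕ, k ≤ N + 1 → ((c k : ℝ)) = (k:ℝ) / (N + 1 : ℕ) := fun k hk => by
    simp only [c]; rw [Set.projIcc_of_mem _ (hmem k hk)]
  have hc0 : c 0 = 0 := by
    ext; rw [hcval 0 (Nat.zero_le _)]; simp
  have hcM : c (N + 1) = 1 := by
    ext; rw [hcval _ le_rfl]; rw [div_self hMpos.ne']; simp
  -- the partial maps
  have hgcont : ∀ k, Continuous (fun y => f (cubeSmul (c k) y)) := fun k =>
    hc.comp (continuous_const.prodMk continuous_id)
  have hgclose : ∀ k, k < N + 1 → ∀ y : Fin n → I,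
      dist (f (cubeSmul (c (k+1)) y)) (f (cubeSmul (c k) y)) < 1 := by
    intro k hk y
    have := hδ' (a := (c (k+1), y)) (b := (c k, y))
    refine this ?_
    rw [Prod.dist_eq, dist_self]
    have h1 : dist (c (k+1)) (c k) < δ := by
      rw [Subtype.dist_eq, hcval _ hk, hcval _ (le_of_lt hk), Real.dist_eq, div_sub_div_same]
      push_cast [Nat.succ_eq_add_one]
      rw [add_sub_cancel_left, _root_.abs_of_nonneg (by positivity : (0:ℝ) ≤ 1 / (↑N + 1))]
      exact hN
    exact max_lt h1 hδ
  -- the ratios have positive real part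
  have hre : ∀ k, k < N + 1 → ∀ y : Fin n → I,
      0 < (((f (cubeSmul (c (k+1)) y) : ℂ)) / (f (cubeSmul (c k) y) : ℂ)).re :=
    fun k hk y => re_pos_of_dist_lt_one (hgclose k hk y)
  -- the lift
  refine ⟨fun y => Complex.arg (f (fun _ => 0)) + ∑ k ∈ Finset.range (N+1),
      Complex.arg ((f (cubeSmul (c (k+1)) y) : ℂ) / (f (cubeSmul (c k) y) : ℂ)), ?_, ?_⟩
  · refine continuous_const.add (continuous_finset_sum _ fun k hk => ?_)
    have hk' : k < N + 1 := Finset.mem_range.1 hk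
    rw [continuous_iff_continuousAt]
    intro y
    have hq : ContinuousAt (fun y : Fin n → I =>
        ((f (cubeSmul (c (k+1)) y) : ℂ) / (f (cubeSmul (c k) y) : ℂ))) y :=
      ContinuousAt.div
        (Continuous.continuousAt (continuous_subtype_val.comp (hgcont (k+1))))
        (Continuous.continuousAt (continuous_subtype_val.comp (hgcont k)))
        (Circle.coe_ne_zero _)
    exact ContinuousAt.comp (g := Complex.arg)
      (Complex.continuousAt_arg (Complex.mem_slitPlane_iff.2 (Or.inl (hre k hk' y)))) hq
  · intro y
    rw [Circle.exp_add, exp_sum]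
    have key : ∀ k ∈ Finset.range (N+1),
        Circle.exp (Complex.arg ((f (cubeSmul (c (k+1)) y) : ℂ) / (f (cubeSmul (c k) y) : ℂ)))
          = f (cubeSmul (c (k+1)) y) / f (cubeSmul (c k) y) := by
      intro k hk
      have : ((f (cubeSmul (c (k+1)) y) / f (cubeSmul (c k) y) : Circle) : ℂ)
          = (f (cubeSmul (c (k+1)) y) : ℂ) / (f (cubeSmul (c k) y) : ℂ) := Circle.coe_div _ _
      rw [← this]
      exact Circle.exp_arg _
    rw [Finset.prod_congr rfl key, Finset.prod_range_div (fun k => f (cubeSmul (c k) y))]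
    rw [hc0, hcM, cubeSmul_zero, cubeSmul_one]
    rw [Circle.exp_arg]
    exact mul_div_cancel _ _



lemma face_preconnected {n : ℕ} (i : Fin n) (a : I) :
    IsPreconnected {y : Fin n → I | y i = a} := by
  have : {y : Fin n → I | y i = a} = Set.range (fun y : Fin n → I => Function.update y i a) := by
    ext y
    constructor
    · intro hy
      refine ⟨y, ?_⟩
      show Function.update y i a = y
      rw [← hy, Function.update_eq_self]
    · rintro ⟨z, rfl⟩
      simp [Function.update_self]
  rw [this]
  exact isPreconnected_range (continuous_id.update i continuous_const)

lemma boundary_preconnected {n : ℕ} (hn : 2 ≤ n) :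
    IsPreconnected (Cube.boundary (Fin n)) := by
  set i0 : Fin n := ⟨0, by omega⟩ with hi0
  set i1 : Fin n := ⟨1, by omega⟩ with hi1
  have hne : i0 ≠ i1 := by simp [hi0, hi1, Fin.ext_iff]
  have hU0 : IsPreconnected (⋃ i : Fin n, {y : Fin n → I | y i = 0}) := by
    exact isPreconnected_iUnion ⟨fun _ => 0, Set.mem_iInter.2 fun i => rfl⟩
      (fun i => face_preconnected i 0)
  have hU1 : IsPreconnected (⋃ i : Fin n, {y : Fin n → I | y i = 1}) := by
    exact isPreconnected_iUnion ⟨fun _ => 1, Set.mem_iInter.2 fun i => rfl⟩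
      (fun i => face_preconnected i 1)
  have hbd : Cube.boundary (Fin n) =
      (⋃ i : Fin n, {y : Fin n → I | y i = 0}) ∪ (⋃ i : Fin n, {y : Fin n → I | y i = 1}) := by
    ext y
    simp [Cube.boundary, exists_or]
  rw [hbd]
  -- a common point: 0 at coordinate i0, 1 elsewhere
  refine IsPreconnected.union (Function.update (fun _ => (1:I)) i0 0) ?_ ?_ hU0 hU1
  · exact Set.mem_iUnion.2 ⟨i0, by simp⟩
  · exact Set.mem_iUnion.2 ⟨i1, by simp [Function.update_of_ne (Ne.symm hne)]⟩

/-- A continuous real-valued function whose `Circle.exp` is constant is constant on a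
preconnected set. -/
lemma lift_const_on {Y : Type*} [TopologicalSpace Y] {s : Set Y} (hs : IsPreconnected s)
    {L : Y → ℝ} (hL : Continuous L) {x : Circle} (h : ∀ y ∈ s, Circle.exp (L y) = x)
    {a b : Y} (ha : a ∈ s) (hb : b ∈ s) : L a = L b := by
  -- it suffices to rule out L a < L b
  have key : ∀ u ∈ s, ∀ v ∈ s, ¬ (L u < L v) := by
    intro u hu v hv hlt
    have hexp : Circle.exp (L v) = Circle.exp (L u) := by rw [h u hu, h v hv]
    obtain ⟨m, hm⟩ := Circle.exp_eq_exp.1 hexp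
    have hm0 : (0:ℝ) < m * (2 * Real.pi) := by linarith [hm]
    have hmpos : (1:ℝ) ≤ m := by
      by_contra hc
      push_neg at hc
      have : (m:ℝ) ≤ 0 := by
        have : m ≤ 0 := by exact_mod_cast Int.lt_add_one_iff.mp (by exact_mod_cast hc)
        exact_mod_cast this
      nlinarith [Real.pi_pos]
    have hge : L u + 2 * Real.pi ≤ L v := by nlinarith [Real.pi_pos]
    -- the image is ord-connected
    have himg : IsPreconnected (L '' s) := hs.image L hL.continuousOn
    have hoc : Set.OrdConnected (L '' s) := himg.ordConnected
    have hmid : L u + Real.pi ∈ L '' s := by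
      refine hoc.out ⟨u, hu, rfl⟩ ⟨v, hv, rfl⟩ ?_
      constructor
      · linarith [Real.pi_pos]
      · linarith
    obtain ⟨w, hw, hLw⟩ := hmid
    have : Circle.exp (L u + Real.pi) = Circle.exp (L u) := by
      rw [← hLw, h w hw, h u hu]
    rw [Circle.exp_add] at this
    have h1 : Circle.exp Real.pi = 1 :=
      mul_left_cancel (a := Circle.exp (L u)) (by rw [mul_one]; exact this)
    obtain ⟨k, hk⟩ := Circle.exp_eq_one.1 h1
    have h2 : (1:ℝ) * Real.pi = (2 * k) * Real.pi := by linarith [hk]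
    have h3 := mul_right_cancel₀ Real.pi_ne_zero h2
    have : (1:ℤ) = 2 * k := by exact_mod_cast h3
    omega
  rcases lt_trichotomy (L a) (L b) with h' | h' | h'
  · exact absurd h' (key a ha b hb)
  · exact h'
  · exact absurd h' (key b hb a ha)

lemma homotopic (n : ℕ) (hn : 2 ≤ n) (x : Circle) (f g : GenLoop (Fin n) Circle x) :
    GenLoop.Homotopic f g := by
  obtain ⟨Lf, hLfc, hLf⟩ := exists_lift f.1
  obtain ⟨Lg, hLgc, hLg⟩ := exists_lift g.1
  -- base point of the boundary
  set y₀ : Fin n → I := fun _ => 0 with hy₀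
  have hy₀b : y₀ ∈ Cube.boundary (Fin n) := ⟨⟨0, by omega⟩, Or.inl rfl⟩
  have hfy₀ : Circle.exp (Lf y₀) = x := by rw [hLf]; exact f.2 y₀ hy₀b
  have hgy₀ : Circle.exp (Lg y₀) = x := by rw [hLg]; exact g.2 y₀ hy₀b
  obtain ⟨m, hm⟩ := Circle.exp_eq_exp.1 (hgy₀.trans hfy₀.symm)
  -- adjusted lift of g
  set Lg' : (Fin n → I) → ℝ := fun y => Lg y - m * (2 * Real.pi) with hLg'
  have hLg'c : Continuous Lg' := hLgc.sub continuous_const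
  have hLg'exp : ∀ y, Circle.exp (Lg' y) = g y := by
    intro y
    rw [hLg']
    have : Circle.exp (Lg y) = Circle.exp (Lg y - m * (2 * Real.pi)) :=
      Circle.exp_eq_exp.2 ⟨m, by ring⟩
    rw [← this, hLg]
    rfl
  have hLg'y₀ : Lg' y₀ = Lf y₀ := by
    show Lg y₀ - (m:ℝ) * (2 * Real.pi) = Lf y₀
    rw [hm]; ring
  -- both lifts are constant on the boundary
  have hbc := boundary_preconnected hn
  have hfbd : ∀ y ∈ Cube.boundary (Fin n), Lf y = Lf y₀ := fun y hy =>
    lift_const_on hbc hLfc (fun z hz => by rw [hLf]; exact f.2 z hz) hy hy₀b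
  have hgbd : ∀ y ∈ Cube.boundary (Fin n), Lg' y = Lf y₀ := fun y hy => by
    rw [← hLg'y₀]
    exact lift_const_on hbc hLg'c (fun z hz => by rw [hLg'exp]; exact g.2 z hz) hy hy₀b
  -- the straight-line homotopy
  refine ⟨⟨⟨⟨fun p => Circle.exp ((1 - (p.1 : ℝ)) * Lf p.2 + (p.1 : ℝ) * Lg' p.2), ?_⟩, ?_, ?_⟩, ?_⟩⟩
  · refine Circle.exp.continuous.comp ?_
    have h1 : Continuous fun p : I × (Fin n → I) => (p.1 : ℝ) :=
      continuous_subtype_val.comp continuous_fst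
    exact ((continuous_const.sub h1).mul (hLfc.comp continuous_snd)).add
      (h1.mul (hLg'c.comp continuous_snd))
  · intro y
    simp only [Set.Icc.coe_zero, sub_zero, one_mul, zero_mul, add_zero]
    exact hLf y
  · intro y
    simp only [Set.Icc.coe_one, sub_self, zero_mul, one_mul, zero_add]
    exact hLg'exp y
  · intro t y hy
    have : (1 - (t : ℝ)) * Lf y + (t : ℝ) * Lg' y = Lf y := by
      rw [hfbd y hy, hgbd y hy]; ring
    show Circle.exp _ = _
    rw [this, hLf]



end PiNCircle

end

/-- All higher homotopy groups of the circle vanish: for `n ≥ 2`, `πₙ(S¹, x)` is trivial. -/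
theorem pi_n_circle_subsingleton (n : ℕ) (hn : 2 ≤ n) (x : Circle) :
    Subsingleton (HomotopyGroup (Fin n) Circle x) := by
  constructor
  intro a b
  induction a using Quotient.inductionOn with
  | h f =>
  induction b using Quotient.inductionOn with
  | h g =>
  exact Quotient.sound (PiNCircle.homotopic n hn x f g)
end

section
/- The fibres of the Hopf map are circles: let S³ be the unit sphere centered at 0 in EuclideanSpace ℂ (Fin 2) and let p : S³ → ℙ ℂ (EuclideanSpace ℂ (Fin 2)) send a unit vector v to its class Projectivization.mk v (which is defined since unit vectors are nonzero). Then for every v ∈ S³, the subspace {w ∈ S³ | p w = p v} is homeomorphic to the unit circle. -/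
open Metric Topology

/-- The quotient topology on the projectivization of a topological vector space. -/
instance Projectivization.instTopologicalSpace (K V : Type*) [DivisionRing K]
    [AddCommGroup V] [Module K V] [TopologicalSpace V] :
    TopologicalSpace (Projectivization K V) :=
  inferInstanceAs (TopologicalSpace (Quotient (projectivizationSetoid K V)))

/-- The Hopf map `S³ → ℙ ℂ (EuclideanSpace ℂ (Fin 2))`. -/
noncomputable def hopfMap (w : sphere (0 : EuclideanSpace ℂ (Fin 2)) 1) :
    Projectivization ℂ (EuclideanSpace ℂ (Fin 2)) :=
  Projectivization.mk ℂ (w : EuclideanSpace ℂ (Fin 2)) (ne_of_mem_sphere w.2 one_ne_zero)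

/-- The fibres of the Hopf map are circles. -/
theorem hopfMap_fibre_homeomorph_circle (v : sphere (0 : EuclideanSpace ℂ (Fin 2)) 1) :
    Nonempty ({ w : sphere (0 : EuclideanSpace ℂ (Fin 2)) 1 // hopfMap w = hopfMap v } ≃ₜ
      Circle) := by
  have hv : (v : EuclideanSpace ℂ (Fin 2)) ≠ 0 := ne_of_mem_sphere v.2 one_ne_zero
  have hvn : ‖(v : EuclideanSpace ℂ (Fin 2))‖ = 1 := mem_sphere_zero_iff_norm.1 v.2
  have mem : ∀ z : Circle, (z : ℂ) • (v : EuclideanSpace ℂ (Fin 2)) ∈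
      sphere (0 : EuclideanSpace ℂ (Fin 2)) 1 := by
    intro z
    simp [mem_sphere_zero_iff_norm, norm_smul, hvn, Circle.norm_coe]
  have fib : ∀ z : Circle,
      hopfMap (⟨(z : ℂ) • (v : EuclideanSpace ℂ (Fin 2)), mem z⟩ :
        sphere (0 : EuclideanSpace ℂ (Fin 2)) 1) = hopfMap v := by
    intro z
    apply (Projectivization.mk_eq_mk_iff ℂ _ _ _ hv).2
    exact ⟨Circle.toUnits z, rfl⟩
  let f : Circle → { w : sphere (0 : EuclideanSpace ℂ (Fin 2)) 1 // hopfMap w = hopfMap v } :=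
    fun z => ⟨⟨(z : ℂ) • (v : EuclideanSpace ℂ (Fin 2)), mem z⟩, fib z⟩
  have hinj : Function.Injective f := by
    intro z w h
    have : (z : ℂ) • (v : EuclideanSpace ℂ (Fin 2)) = (w : ℂ) • v := by
      simpa [f, Subtype.ext_iff] using h
    exact Circle.ext <| smul_left_injective ℂ hv this
  have hsurj : Function.Surjective f := by
    rintro ⟨⟨w, hw⟩, hfib⟩
    have hw' : w ≠ 0 := ne_of_mem_sphere hw one_ne_zero
    obtain ⟨a, ha⟩ := (Projectivization.mk_eq_mk_iff ℂ _ _ hw' hv).1 hfib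
    have hwn : ‖w‖ = 1 := mem_sphere_zero_iff_norm.1 hw
    have ha' : (a : ℂ) • (v : EuclideanSpace ℂ (Fin 2)) = w := by
      rw [← Units.smul_def]; exact ha
    have hna : ‖(a : ℂ)‖ = 1 := by
      have : ‖(a : ℂ) • (v : EuclideanSpace ℂ (Fin 2))‖ = 1 := by rw [ha']; exact hwn
      rw [norm_smul, hvn, mul_one] at this
      exact this
    refine ⟨⟨(a : ℂ), show (a : ℂ) ∈ sphere (0:ℂ) 1 from mem_sphere_zero_iff_norm.2 hna⟩, ?_⟩
    simp only [f, Subtype.ext_iff]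
    exact ha'
  have hcont : Continuous f := by
    apply Continuous.subtype_mk
    apply Continuous.subtype_mk
    exact (continuous_subtype_val.smul continuous_const)
  exact ⟨(Continuous.homeoOfEquivCompactToT2 (f := Equiv.ofBijective f ⟨hinj, hsurj⟩) hcont).symm⟩
end

section
/- The complex projective line is homeomorphic to the 2-sphere: there is a homeomorphism between ℙ ℂ (EuclideanSpace ℂ (Fin 2)) and the unit sphere centered at 0 in EuclideanSpace ℝ (Fin 3). -/
open Metric Topology

noncomputable section CP1Aux

open Complex ComplexConjugate
open scoped LinearAlgebra.Projectivization

namespace CP1Aux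

abbrev V2 := EuclideanSpace ℂ (Fin 2)
abbrev R3 := EuclideanSpace ℝ (Fin 3)

def nn (v : V2) : ℝ := normSq (v 0) + normSq (v 1)

lemma eq_zero_iff (v : V2) : v = 0 ↔ v 0 = 0 ∧ v 1 = 0 := by
  constructor
  · rintro rfl; simp
  · rintro ⟨h0, h1⟩
    ext i
    fin_cases i <;> simpa

lemma nn_pos {v : V2} (hv : v ≠ 0) : 0 < nn v := by
  rcases lt_or_eq_of_le (add_nonneg (normSq_nonneg (v 0)) (normSq_nonneg (v 1)) : 0 ≤ nn v) with h | h
  · exact h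
  · exfalso
    apply hv
    rw [eq_zero_iff]
    have h' : 0 = normSq (v 0) + normSq (v 1) := h
    constructor <;>
      rw [← normSq_eq_zero] <;>
      linarith [normSq_nonneg (v 0), normSq_nonneg (v 1)]

def F (v : V2) : R3 := (WithLp.equiv 2 (Fin 3 → ℝ)).symm
  ![ (nn v)⁻¹ * (2 * (v 0 * conj (v 1)).re),
     (nn v)⁻¹ * (2 * (v 0 * conj (v 1)).im),
     (nn v)⁻¹ * (normSq (v 0) - normSq (v 1)) ]

lemma key (z w : ℂ) :
    (2 * (z * conj w).re) ^ 2 + (2 * (z * conj w).im) ^ 2 + (normSq z - normSq w) ^ 2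
      = (normSq z + normSq w) ^ 2 := by
  simp only [normSq_apply, mul_re, mul_im, conj_re, conj_im]
  ring

lemma F_mem {v : V2} (hv : v ≠ 0) : F v ∈ sphere (0 : R3) 1 := by
  have hn := nn_pos hv
  rw [mem_sphere_zero_iff_norm, EuclideanSpace.norm_eq]
  rw [show (1 : ℝ) = Real.sqrt 1 from (Real.sqrt_one).symm]
  congr 1
  simp only [F, WithLp.equiv_symm_apply, PiLp.toLp_apply, Fin.sum_univ_three, Matrix.cons_val_zero,
    Matrix.cons_val_one, Matrix.head_cons, Matrix.cons_val_two, Matrix.tail_cons,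
    Real.norm_eq_abs, sq_abs]
  have := key (v 0) (v 1)
  field_simp [nn] at this ⊢
  rw [this]
  have hn' : nn v ≠ 0 := ne_of_gt hn
  simp only [nn] at hn'
  rfl

lemma nn_smul (c : ℂ) (v : V2) : nn (c • v) = normSq c * nn v := by
  simp only [nn, PiLp.smul_apply, smul_eq_mul, map_mul]
  ring

lemma F_smul {c : ℂ} (hc : c ≠ 0) {v : V2} (hv : v ≠ 0) : F (c • v) = F v := by
  have hc' : normSq c ≠ 0 := by simpa using hc
  have hn : nn v ≠ 0 := ne_of_gt (nn_pos hv)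
  have hcc : ∀ z w : ℂ, (c * z) * conj (c * w) = (normSq c : ℂ) * (z * conj w) := by
    intro z w
    rw [map_mul]
    calc c * z * (conj c * conj w) = (c * conj c) * (z * conj w) := by ring
      _ = (normSq c : ℂ) * (z * conj w) := by rw [mul_conj]
  have h0 : (nn (c • v))⁻¹ * (2 * ((c • v) 0 * conj ((c • v) 1)).re)
      = (nn v)⁻¹ * (2 * (v 0 * conj (v 1)).re) := by
    simp only [PiLp.smul_apply, smul_eq_mul, nn_smul, hcc, re_ofReal_mul, mul_inv]
    field_simp
  have h1 : (nn (c • v))⁻¹ * (2 * ((c • v) 0 * conj ((c • v) 1)).im)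
      = (nn v)⁻¹ * (2 * (v 0 * conj (v 1)).im) := by
    simp only [PiLp.smul_apply, smul_eq_mul, nn_smul, hcc, im_ofReal_mul, mul_inv]
    field_simp
  have h2 : (nn (c • v))⁻¹ * (normSq ((c • v) 0) - normSq ((c • v) 1))
      = (nn v)⁻¹ * (normSq (v 0) - normSq (v 1)) := by
    simp only [PiLp.smul_apply, smul_eq_mul, nn_smul, map_mul, mul_inv]
    field_simp
  unfold F
  rw [h0, h1, h2]

lemma F_inj {v w : V2} (hv : v ≠ 0) (hw : w ≠ 0) (h : F v = F w) : ∃ c : ℂ, c • w = v := by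
  have hAB := (WithLp.equiv 2 (Fin 3 → ℝ)).symm.injective h
  set z := v 0 with hz; set u := v 1 with hu
  set z' := w 0 with hz'; set u' := w 1 with hu'
  have hnv : 0 < nn v := nn_pos hv
  have hnw : 0 < nn w := nn_pos hw
  set a := nn v with ha; set b := nn w with hb
  have e0 := congrFun hAB 0
  have e1 := congrFun hAB 1
  have e2 := congrFun hAB 2
  simp only [Matrix.cons_val_zero, Matrix.cons_val_one, Matrix.head_cons,
    Matrix.cons_val_two, Matrix.tail_cons] at e0 e1 e2
  have ha' : a ≠ 0 := ne_of_gt hnv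
  have hb' : b ≠ 0 := ne_of_gt hnw
  simp only [mul_re, mul_im, conj_re, conj_im] at e0 e1
  rw [inv_mul_eq_div, inv_mul_eq_div, div_eq_div_iff ha' hb'] at e0 e1 e2
  have hab : b * (normSq z + normSq u) = a * (normSq z' + normSq u') := by
    have h1 : a = normSq z + normSq u := rfl
    have h2 : b = normSq z' + normSq u' := rfl
    rw [← h1, ← h2]; ring
  have hsz : b * normSq z = a * normSq z' := by linear_combination (e2 + hab) / 2
  have hsu : b * normSq u = a * normSq u' := by linear_combination (hab - e2) / 2
  have hC : (b : ℂ) * (z * conj u) = (a : ℂ) * (z' * conj u') := by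
    apply Complex.ext
    · simp only [mul_re, mul_im, conj_re, conj_im, ofReal_re, ofReal_im]
      linear_combination e0 / 2
    · simp only [mul_re, mul_im, conj_re, conj_im, ofReal_re, ofReal_im]
      linear_combination e1 / 2
  by_cases hu'0 : u' = 0
  · have hsu'0 : normSq u' = 0 := by rw [hu'0]; simp
    have hu0 : u = 0 := by
      rw [← normSq_eq_zero]
      have : b * normSq u = 0 := by rw [hsu, hsu'0]; ring
      rcases mul_eq_zero.mp this with h' | h'
      · exact absurd h' (ne_of_gt hnw)
      · exact h'
    have hz0 : z ≠ 0 := by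
      intro h'
      exact hv ((eq_zero_iff v).mpr ⟨h', hu0⟩)
    have hz'0 : z' ≠ 0 := by
      intro h'
      exact hw ((eq_zero_iff w).mpr ⟨h', hu'0⟩)
    refine ⟨z / z', ?_⟩
    ext i
    fin_cases i <;>
      simp only [PiLp.smul_apply, smul_eq_mul]
    · show z / z' * z' = z
      exact div_mul_cancel₀ z hz'0
    · show z / z' * u' = u
      rw [hu'0, hu0, mul_zero]
  · have hsu'0 : normSq u' ≠ 0 := by simpa using hu'0
    have hu0 : u ≠ 0 := by
      rw [← normSq_eq_zero.ne]
      intro h'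
      have : b * normSq u = 0 := by rw [h']; ring
      rw [hsu] at this
      exact (mul_ne_zero (ne_of_gt hnv) hsu'0) this
    have mu : conj u * u = (normSq u : ℂ) := by rw [mul_comm, mul_conj]
    have mu' : conj u' * u' = (normSq u' : ℂ) := by rw [mul_comm, mul_conj]
    have hsuC : (b : ℂ) * (normSq u : ℂ) = (a : ℂ) * (normSq u' : ℂ) := by
      exact_mod_cast congrArg (fun r : ℝ => (r : ℂ)) hsu
    have hsu0 : normSq u ≠ 0 := fun h' => hu0 (normSq_eq_zero.mp h')
    have key2 : z * u' = z' * u := by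
      have hne : ((b : ℂ) * (normSq u : ℂ)) ≠ 0 := by
        apply mul_ne_zero
        · exact_mod_cast ne_of_gt hnw
        · exact_mod_cast hsu0
      refine mul_left_cancel₀ hne ?_
      linear_combination (u * u') * hC - ((b : ℂ) * z * u') * mu + ((a : ℂ) * z' * u) * mu'
        - (z' * u) * hsuC
    refine ⟨u / u', ?_⟩
    ext i
    fin_cases i <;>
      simp only [PiLp.smul_apply, smul_eq_mul]
    · show u / u' * z' = z
      field_simp
      linear_combination -key2
    · show u / u' * u' = u
      exact div_mul_cancel₀ u hu'0

lemma F_surj (p : R3) (hp : ‖p‖ = 1) : ∃ v : V2, ∃ hv : v ≠ 0, F v = p := by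
  set x := p 0 with hx; set y := p 1 with hy; set t := p 2 with ht
  have hsum : x ^ 2 + y ^ 2 + t ^ 2 = 1 := by
    rw [EuclideanSpace.norm_eq] at hp
    rw [Real.sqrt_eq_one] at hp
    simpa [Fin.sum_univ_three, Real.norm_eq_abs, sq_abs] using hp
  by_cases h1 : t = 1
  · have hx0 : x = 0 ∧ y = 0 := by constructor <;> nlinarith
    refine ⟨(WithLp.equiv 2 (Fin 2 → ℂ)).symm ![1, 0], ?_, ?_⟩
    · intro h
      have := congrFun (congrArg (WithLp.equiv 2 (Fin 2 → ℂ)) h) 0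
      simp at this
    · ext i
      have h0 : ((WithLp.equiv 2 (Fin 2 → ℂ)).symm ![1, 0] : V2) 0 = 1 := rfl
      have h1' : ((WithLp.equiv 2 (Fin 2 → ℂ)).symm ![1, 0] : V2) 1 = 0 := rfl
      fin_cases i <;>
        simp only [F, WithLp.equiv_symm_apply, PiLp.toLp_apply, Matrix.cons_val_zero, Matrix.cons_val_one,
          Matrix.head_cons, Matrix.cons_val_two, Matrix.tail_cons, nn, h0, h1'] <;>
        simp [← hx, ← hy, ← ht, hx0.1, hx0.2, h1]
  · have ht2 : t ^ 2 ≤ 1 := by nlinarith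
    have htlt : t < 1 := lt_of_le_of_ne (by nlinarith) h1
    have hpos : (0 : ℝ) < (1 - t) / 2 := by linarith
    set r := Real.sqrt ((1 - t) / 2) with hr
    have hrpos : 0 < r := Real.sqrt_pos.mpr hpos
    have hr2 : r ^ 2 = (1 - t) / 2 := Real.sq_sqrt hpos.le
    set z : ℂ := (x + y * I) / (2 * r) with hzdef
    set w : ℂ := ((r : ℝ) : ℂ) with hwdef
    have hw0 : w ≠ 0 := by
      simp only [hwdef, ne_eq, ofReal_eq_zero]
      exact ne_of_gt hrpos
    have hnsw : normSq w = (1 - t) / 2 := by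
      rw [hwdef, normSq_ofReal, ← hr2]; ring
    have hnsz : normSq z = (1 + t) / 2 := by
      rw [hzdef, map_div₀, normSq_add_mul_I]
      have : normSq (2 * r) = 4 * r ^ 2 := by
        rw [show ((2 : ℂ) * r) = ((2 * r : ℝ) : ℂ) by push_cast; ring, normSq_ofReal]
        ring
      rw [this, hr2]
      have hxy : x ^ 2 + y ^ 2 = (1 - t) * (1 + t) := by nlinarith
      rw [hxy]
      have h1t : (1 : ℝ) - t ≠ 0 := ne_of_gt (by linarith)
      field_simp
      ring
    have hzw : z * conj w = (x + y * I) / 2 := by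
      rw [hzdef, hwdef]
      rw [show conj ((r : ℝ) : ℂ) = ((r : ℝ) : ℂ) from Complex.conj_ofReal r]
      have : ((r : ℝ) : ℂ) ≠ 0 := by simpa using ne_of_gt hrpos
      field_simp
    refine ⟨(WithLp.equiv 2 (Fin 2 → ℂ)).symm ![z, w], ?_, ?_⟩
    · intro h
      have := congrFun (congrArg (WithLp.equiv 2 (Fin 2 → ℂ)) h) 1
      simp only [Equiv.apply_symm_apply, Matrix.cons_val_one, Matrix.head_cons] at this
      exact hw0 this
    · have h0 : ((WithLp.equiv 2 (Fin 2 → ℂ)).symm ![z, w] : V2) 0 = z := rfl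
      have h1' : ((WithLp.equiv 2 (Fin 2 → ℂ)).symm ![z, w] : V2) 1 = w := rfl
      have hnn : nn ((WithLp.equiv 2 (Fin 2 → ℂ)).symm ![z, w]) = 1 := by
        rw [nn, h0, h1', hnsz, hnsw]; ring
      rw [WithLp.equiv_symm_apply] at hnn h0 h1'
      ext i
      fin_cases i <;>
        simp only [F, WithLp.equiv_symm_apply, PiLp.toLp_apply, Matrix.cons_val_zero, Matrix.cons_val_one,
          Matrix.head_cons, Matrix.cons_val_two, Matrix.tail_cons, hnn, h0, h1', hzw,
          inv_one, one_mul]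
      · show 2 * ((x + y * I) / 2).re = p 0
        simp [div_re]
        rw [← hx]; ring
      · show 2 * ((x + y * I) / 2).im = p 1
        simp [div_im]
        rw [← hy]; ring
      · show normSq z - normSq w = p 2
        rw [hnsz, hnsw, ← ht]; ring

lemma cont_proj (i : Fin 2) : Continuous fun v : V2 => v i :=
  (continuous_apply i).comp (PiLp.continuous_ofLp 2 (fun _ : Fin 2 => ℂ))

lemma cont_nn : Continuous fun u : {v : V2 // v ≠ 0} => nn u.1 := by
  unfold nn
  exact ((Complex.continuous_normSq.comp ((cont_proj 0).comp continuous_subtype_val)).add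
    (Complex.continuous_normSq.comp ((cont_proj 1).comp continuous_subtype_val)))

lemma cont_F : Continuous fun u : {v : V2 // v ≠ 0} => F u.1 := by
  apply (PiLp.continuous_toLp 2 (fun _ : Fin 3 => ℝ)).comp
  apply continuous_pi
  have hinv : Continuous fun u : {v : V2 // v ≠ 0} => (nn u.1)⁻¹ :=
    cont_nn.inv₀ (fun u => ne_of_gt (nn_pos u.2))
  have hzw : Continuous fun u : {v : V2 // v ≠ 0} => u.1 0 * conj (u.1 1) :=
    ((cont_proj 0).comp continuous_subtype_val).mul
      (Complex.continuous_conj.comp ((cont_proj 1).comp continuous_subtype_val))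
  intro i
  fin_cases i <;>
    simp only [Matrix.cons_val_zero, Matrix.cons_val_one, Matrix.head_cons,
      Matrix.cons_val_two, Matrix.tail_cons]
  · exact hinv.mul ((continuous_const).mul (Complex.continuous_re.comp hzw))
  · exact hinv.mul ((continuous_const).mul (Complex.continuous_im.comp hzw))
  · exact hinv.mul (((Complex.continuous_normSq.comp ((cont_proj 0).comp continuous_subtype_val)).sub
      (Complex.continuous_normSq.comp ((cont_proj 1).comp continuous_subtype_val))))

def toFun : ℙ ℂ V2 → sphere (0 : R3) 1 :=
  Projectivization.lift
    (fun u : {v : V2 // v ≠ 0} => (⟨F u.1, F_mem u.2⟩ : sphere (0 : R3) 1))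
    (by
      rintro ⟨v, hv⟩ ⟨w, hw⟩ t h
      simp only at h
      have ht : t ≠ 0 := by
        rintro rfl
        rw [zero_smul] at h
        exact hv h
      apply Subtype.ext
      simp only
      rw [h]
      exact F_smul ht hw)

lemma toFun_mk (v : V2) (hv : v ≠ 0) :
    toFun (Projectivization.mk ℂ v hv) = ⟨F v, F_mem hv⟩ := rfl

lemma toFun_bijective : Function.Bijective toFun := by
  constructor
  · intro p q
    induction' p using Projectivization.ind with v hv
    induction' q using Projectivization.ind with w hw
    intro h
    rw [toFun_mk, toFun_mk, Subtype.mk.injEq] at h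
    rw [Projectivization.mk_eq_mk_iff']
    exact F_inj hv hw h
  · rintro ⟨p, hp⟩
    rw [mem_sphere_zero_iff_norm] at hp
    obtain ⟨v, hv, hFv⟩ := F_surj p hp
    exact ⟨Projectivization.mk ℂ v hv, Subtype.ext (by rw [toFun_mk]; exact hFv)⟩

lemma toFun_continuous : Continuous toFun := by
  have hq : IsQuotientMap (Projectivization.mk' ℂ : {v : V2 // v ≠ 0} → ℙ ℂ V2) :=
    isQuotientMap_quotient_mk'
  rw [hq.continuous_iff]
  exact cont_F.subtype_mk _

instance : CompactSpace (ℙ ℂ V2) := by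
  constructor
  set g : sphere (0 : V2) 1 → ℙ ℂ V2 := fun u =>
    Projectivization.mk' ℂ ⟨u.1, by
      intro h
      have := u.2
      rw [mem_sphere_zero_iff_norm, h] at this
      simp at this⟩ with hg
  have hcont : Continuous g :=
    continuous_quotient_mk'.comp (continuous_subtype_val.subtype_mk _)
  have hsurj : Function.Surjective g := by
    intro p
    induction' p using Projectivization.ind with v hv
    have hnv : ‖v‖ ≠ 0 := norm_ne_zero_iff.mpr hv
    refine ⟨⟨((‖v‖ : ℂ))⁻¹ • v, ?_⟩, ?_⟩
    · rw [mem_sphere_zero_iff_norm, norm_smul, norm_inv, Complex.norm_real,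
        Real.norm_eq_abs, abs_norm, inv_mul_cancel₀ hnv]
    · rw [hg]
      simp only [Projectivization.mk'_eq_mk]
      rw [Projectivization.mk_eq_mk_iff']
      exact ⟨((‖v‖ : ℂ))⁻¹, rfl⟩
  rw [← hsurj.range_eq]
  exact isCompact_range hcont

def theHomeo : ℙ ℂ V2 ≃ₜ sphere (0 : R3) 1 :=
  Continuous.homeoOfEquivCompactToT2 (f := Equiv.ofBijective toFun toFun_bijective)
    toFun_continuous

end CP1Aux

end CP1Aux

/-- The complex projective line is homeomorphic to the 2-sphere. -/
theorem complex_projective_line_homeomorph_sphere2 :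
    Nonempty (Projectivization ℂ (EuclideanSpace ℂ (Fin 2)) ≃ₜ
      sphere (0 : EuclideanSpace ℝ (Fin 3)) 1) :=
  ⟨CP1Aux.theHomeo⟩
end

section
/- The fibres of the quotient map from the 5-sphere to the complex projective plane are circles: let S⁵ be the unit sphere centered at 0 in EuclideanSpace ℂ (Fin 3) and let q : S⁵ → ℙ ℂ (EuclideanSpace ℂ (Fin 3)) send a unit vector v to its class Projectivization.mk v. Then for every v ∈ S⁵, the subspace {w ∈ S⁵ | q w = q v} is homeomorphic to the unit circle. -/
open Metric Topology

/-- The quotient map `S⁵ → ℙ ℂ (EuclideanSpace ℂ (Fin 3))`. -/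
noncomputable def quotMapS5 (w : sphere (0 : EuclideanSpace ℂ (Fin 3)) 1) :
    Projectivization ℂ (EuclideanSpace ℂ (Fin 3)) :=
  Projectivization.mk ℂ (w : EuclideanSpace ℂ (Fin 3)) (ne_of_mem_sphere w.2 one_ne_zero)

/-- The fibres of the quotient map from the 5-sphere to the complex projective
plane are circles. -/
theorem quotMapS5_fibre_homeomorph_circle (v : sphere (0 : EuclideanSpace ℂ (Fin 3)) 1) :
    Nonempty ({ w : sphere (0 : EuclideanSpace ℂ (Fin 3)) 1 // quotMapS5 w = quotMapS5 v } ≃ₜ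
      Circle) := by
  have hv : (v : EuclideanSpace ℂ (Fin 3)) ≠ 0 := ne_of_mem_sphere v.2 one_ne_zero
  have norm_v : ‖(v : EuclideanSpace ℂ (Fin 3))‖ = 1 :=
    mem_sphere_zero_iff_norm.mp v.2
  set f : Circle → { w : sphere (0 : EuclideanSpace ℂ (Fin 3)) 1 // quotMapS5 w = quotMapS5 v } :=
    fun z => ⟨⟨(z : ℂ) • (v : EuclideanSpace ℂ (Fin 3)), by
        simp [mem_sphere_zero_iff_norm, norm_smul, norm_v, Circle.norm_coe]⟩, by
      simp only [quotMapS5]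
      exact (Projectivization.mk_eq_mk_iff ℂ _ _ _ hv).mpr
        ⟨Circle.toUnits z, by simp [Units.smul_def]⟩⟩ with hf
  have hbij : Function.Bijective f := by
    constructor
    · intro a b hab
      have : (a : ℂ) • (v : EuclideanSpace ℂ (Fin 3)) = (b : ℂ) • v := by
        simpa [hf, Subtype.ext_iff] using hab
      have := smul_left_injective ℂ hv this
      exact Subtype.ext (by exact_mod_cast this)
    · rintro ⟨⟨w, hw⟩, hqw⟩
      have hwne : w ≠ 0 := ne_of_mem_sphere hw one_ne_zero
      obtain ⟨a, ha⟩ := (Projectivization.mk_eq_mk_iff ℂ _ _ hwne hv).mp hqw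
      have hnormw : ‖w‖ = 1 := by simpa using mem_sphere_zero_iff_norm.mp hw
      have hna : ‖(a : ℂ)‖ = 1 := by
        have : ‖(a : ℂ) • (v : EuclideanSpace ℂ (Fin 3))‖ = ‖w‖ := by
          rw [← ha]; simp [Units.smul_def]
        rw [norm_smul, norm_v, mul_one, hnormw] at this
        exact this
      refine ⟨⟨(a : ℂ), mem_sphere_zero_iff_norm.mpr hna⟩, ?_⟩
      apply Subtype.ext
      apply Subtype.ext
      simpa [hf, Units.smul_def] using ha
  have hcont : Continuous f := by
    apply Continuous.subtype_mk
    apply Continuous.subtype_mk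
    exact (continuous_subtype_val.comp continuous_id).smul continuous_const
  exact ⟨(hcont.homeoOfEquivCompactToT2 (f := Equiv.ofBijective f hbij)).symm⟩
end

section
/- Spheres of dimension at least two are simply connected: for every natural number n ≥ 2, the unit sphere Sⁿ in EuclideanSpace ℝ (Fin (n+1)) is a simply connected space (path-connected with trivial fundamental group). -/
open Metric Topology

open Set unitInterval

namespace SphereSC

variable {Z : Type*} [TopologicalSpace Z]


theorem homotopic_cast {x y x' y' : Z} {p q : Path x y} (h : p.Homotopic q)
    (hx : x' = x) (hy : y' = y) : (p.cast hx hy).Homotopic (q.cast hx hy) := by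
  subst hx; subst hy; exact h

theorem cast_trans {x m y x' m' y' : Z} (q : Path x m) (r : Path m y)
    (hx : x' = x) (hm : m' = m) (hy : y' = y) :
    (q.trans r).cast hx hy = (q.cast hx hm).trans (r.cast hm hy) := by
  subst hx; subst hm; subst hy; rfl

/-- Two paths whose images lie in a simply connected subset are homotopic. -/
theorem homotopic_of_mem {W : Set Z} [SimplyConnectedSpace W] {za zb : Z}
    (p q : Path za zb) (hp : ∀ u, p u ∈ W) (hq : ∀ u, q u ∈ W) : p.Homotopic q := by
  have ha : za ∈ W := by rw [← p.source]; exact hp 0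
  have hb : zb ∈ W := by rw [← p.target]; exact hp 1
  let p' : Path (⟨za, ha⟩ : W) ⟨zb, hb⟩ :=
    ⟨⟨fun u => ⟨p u, hp u⟩, p.continuous.subtype_mk _⟩, Subtype.ext p.source, Subtype.ext p.target⟩
  let q' : Path (⟨za, ha⟩ : W) ⟨zb, hb⟩ :=
    ⟨⟨fun u => ⟨q u, hq u⟩, q.continuous.subtype_mk _⟩, Subtype.ext q.source, Subtype.ext q.target⟩
  have h := SimplyConnectedSpace.paths_homotopic p' q'
  have h2 := h.map (f := ⟨Subtype.val, continuous_subtype_val⟩)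
  have e1 : p'.map continuous_subtype_val = p := by ext u; rfl
  have e2 : q'.map continuous_subtype_val = q := by ext u; rfl
  rwa [e1, e2] at h2


/-- Splitting a truncated path at an intermediate time, up to homotopy. -/
theorem truncate_split {za zb : Z} (p : Path za zb) {a b c : ℝ}
    (h0 : 0 ≤ a) (hab : a ≤ b) (hbc : b ≤ c) (hc1 : c ≤ 1) :
    (p.truncateOfLE (hab.trans hbc)).Homotopic
      ((p.truncateOfLE hab).trans (p.truncateOfLE hbc)) := by
  have hb0 : (0:ℝ) ≤ b := h0.trans hab
  have hb1 : b ≤ 1 := hbc.trans hc1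
  have fmem : ∀ u : I, max (min (2 * (u:ℝ)) b) (2 * (u:ℝ) - 1) ∈ I := by
    intro u
    constructor
    · exact le_max_of_le_left (le_min (by have := u.2.1; linarith) hb0)
    · exact max_le (min_le_right _ _ |>.trans hb1) (by have := u.2.2; linarith)
  set f : I → I := fun u => ⟨max (min (2 * (u:ℝ)) b) (2 * (u:ℝ) - 1), fmem u⟩ with hf
  have hfc : Continuous f := by
    apply Continuous.subtype_mk
    fun_prop
  have hf0 : f 0 = 0 := by
    apply Subtype.ext
    simp only [hf, Icc.coe_zero]
    norm_num [hb0]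
  have hf1 : f 1 = 1 := by
    apply Subtype.ext
    simp only [hf, Icc.coe_one]
    rw [min_eq_right (by linarith)]
    rw [max_eq_right (by linarith)]
    norm_num
  have key : (p.truncateOfLE (hab.trans hbc)).reparam f hfc hf0 hf1
      = (p.truncateOfLE hab).trans (p.truncateOfLE hbc) := by
    ext u
    rw [Path.coe_reparam]
    simp only [Function.comp_apply, Path.trans_apply]
    have hu0 : (0:ℝ) ≤ (u:ℝ) := u.2.1
    have hu1 : (u:ℝ) ≤ 1 := u.2.2
    split_ifs with h
    · -- u ≤ 1/2
      show p.extend (min (max (f u : ℝ) a) c) = p.extend (min (max (2 * (u:ℝ)) a) b)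
      congr 1
      have : (f u : ℝ) = min (2 * (u:ℝ)) b := by
        simp only [hf]
        exact max_eq_left (le_trans (by linarith) (le_min (by linarith) hb0))
      rw [this]
      simp only [min_def, max_def]
      split_ifs <;> linarith
    · -- u > 1/2
      show p.extend (min (max (f u : ℝ) a) c) = p.extend (min (max (2 * (u:ℝ) - 1) b) c)
      congr 1
      have h2 : (f u : ℝ) = max b (2 * (u:ℝ) - 1) := by
        simp only [hf]
        rw [min_eq_right (by push_neg at h; linarith)]
      rw [h2]
      simp only [min_def, max_def]
      split_ifs <;> linarith
  exact ⟨(Path.Homotopy.reparam _ f hfc hf0 hf1).cast rfl key⟩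

variable {n : ℕ}

local notation "E" n => EuclideanSpace ℝ (Fin n)

/-- The sphere minus a point is homeomorphic to Euclidean space. -/
noncomputable def sphereComplHomeo (n : ℕ) (v : sphere (0 : EuclideanSpace ℝ (Fin (n+1))) 1) :
    ({v}ᶜ : Set (sphere (0 : EuclideanSpace ℝ (Fin (n+1))) 1)) ≃ₜ EuclideanSpace ℝ (Fin n) :=
  haveI : Fact (Module.finrank ℝ (EuclideanSpace ℝ (Fin (n+1))) = n + 1) :=
    ⟨finrank_euclideanSpace_fin⟩
  (Homeomorph.setCongr (stereographic'_source v).symm).trans <|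
    (stereographic' n v).toHomeomorphSourceTarget.trans <|
      (Homeomorph.setCongr (stereographic'_target v)).trans (Homeomorph.Set.univ _)

theorem simplyConnected_compl (v : sphere (0 : EuclideanSpace ℝ (Fin (n+1))) 1) :
    SimplyConnectedSpace ({v}ᶜ : Set (sphere (0 : EuclideanSpace ℝ (Fin (n+1))) 1)) :=
  haveI : ContractibleSpace ({v}ᶜ : Set (sphere (0 : EuclideanSpace ℝ (Fin (n+1))) 1)) :=
    (sphereComplHomeo n v).contractibleSpace
  inferInstance

theorem isPathConnected_compl (hn : 1 ≤ n)
    (v : sphere (0 : EuclideanSpace ℝ (Fin (n+1))) 1) :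
    IsPathConnected ({v}ᶜ : Set (sphere (0 : EuclideanSpace ℝ (Fin (n+1))) 1)) := by
  rw [isPathConnected_iff_pathConnectedSpace]
  have : PathConnectedSpace (EuclideanSpace ℝ (Fin n)) := inferInstance
  exact (sphereComplHomeo n v).symm.surjective.pathConnectedSpace
    (sphereComplHomeo n v).symm.continuous

/-- The sphere minus two points is path-connected in dimension ≥ 2. -/
theorem isPathConnected_compl_pair (hn : 2 ≤ n)
    (v w : sphere (0 : EuclideanSpace ℝ (Fin (n+1))) 1) :
    IsPathConnected (({v}ᶜ ∩ {w}ᶜ) :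
      Set (sphere (0 : EuclideanSpace ℝ (Fin (n+1))) 1)) := by
  have hrank : 1 < Module.rank ℝ (EuclideanSpace ℝ (Fin n)) := by
    rw [← Module.finrank_eq_rank, finrank_euclideanSpace_fin]
    exact_mod_cast lt_of_lt_of_le one_lt_two (by exact_mod_cast hn)
  by_cases hvw : w = v
  · subst hvw
    simpa [inter_self] using isPathConnected_compl (by omega) w
  have hw : w ∈ ({v}ᶜ : Set (sphere (0 : EuclideanSpace ℝ (Fin (n+1))) 1)) := hvw
  set e := sphereComplHomeo n v with he
  have hpc : IsPathConnected ({e ⟨w, hw⟩}ᶜ : Set (EuclideanSpace ℝ (Fin n))) :=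
    isPathConnected_compl_singleton_of_one_lt_rank hrank _
  have h2 := (hpc.image e.symm.continuous).image continuous_subtype_val
  have key : (({v}ᶜ ∩ {w}ᶜ) : Set (sphere (0 : EuclideanSpace ℝ (Fin (n+1))) 1))
      = Subtype.val '' (e.symm '' ({e ⟨w, hw⟩}ᶜ)) := by
    ext x
    constructor
    · rintro ⟨hxv, hxw⟩
      refine ⟨⟨x, hxv⟩, ⟨e ⟨x, hxv⟩, ?_, e.symm_apply_apply _⟩, rfl⟩
      intro hmem
      apply hxw
      have : (⟨x, hxv⟩ : ({v}ᶜ : Set _)) = ⟨w, hw⟩ := e.injective hmem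
      simpa using congrArg Subtype.val this
    · rintro ⟨⟨x', hx'v⟩, ⟨z, hz, hzz⟩, rfl⟩
      refine ⟨hx'v, ?_⟩
      intro hxw
      apply hz
      have : (⟨x', hx'v⟩ : ({v}ᶜ : Set _)) = ⟨w, hw⟩ := Subtype.ext hxw
      rw [← hzz] at this
      rw [← this, e.apply_symm_apply]
      exact Set.mem_singleton _
  rwa [key]

theorem truncate_apply' {Z : Type*} [TopologicalSpace Z] {za zb : Z} (γ : Path za zb)
    (t₀ t₁ : ℝ) (u : I) : γ.truncate t₀ t₁ u = γ.extend (min (max ↑u t₀) t₁) := rfl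

theorem base_aux {Z : Type*} [TopologicalSpace Z] {x₀ x y : Z} (α : ∀ z : Z, Path x₀ z)
    (e : y = x) (q : Path x y) (hq : ∀ u, q u = x) :
    q.Homotopic ((α x).symm.trans (α y)) := by
  subst e
  exact ⟨(Path.Homotopy.reflSymmTrans (α y)).cast (Path.ext (funext fun u => (hq u).symm)) rfl⟩

theorem transfer_aux {Z : Type*} [TopologicalSpace Z] {x₀ x y y' : Z} (α : ∀ z : Z, Path x₀ z)
    (e : y = y') (q : Path x y) (r : Path x y') (hqr : ∀ u, q u = r u)
    (h : q.Homotopic ((α x).symm.trans (α y))) :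
    r.Homotopic ((α x).symm.trans (α y')) := by
  subst e
  have hqr' : q = r := Path.ext (funext fun u => hqr u)
  rwa [← hqr']

end SphereSC

open SphereSC in
/-- Spheres of dimension at least two are simply connected. -/
theorem sphere_simplyConnected (n : ℕ) (hn : 2 ≤ n) :
    SimplyConnectedSpace (sphere (0 : EuclideanSpace ℝ (Fin (n + 1))) 1) := by
  have h3 : (3:ℕ) ≤ n + 1 := by omega
  set E := EuclideanSpace ℝ (Fin (n+1)) with hE
  obtain ⟨i0, i1, hi01⟩ : ∃ i0 i1 : Fin (n+1), i0 ≠ i1 :=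
    ⟨⟨0, by omega⟩, ⟨1, by omega⟩, by simp [Fin.ext_iff]⟩
  have hmem : ∀ i : Fin (n+1), ∀ r : ℝ, ‖r‖ = 1 →
      EuclideanSpace.single i r ∈ sphere (0 : E) 1 := by
    intro i r hr
    rw [mem_sphere_zero_iff_norm, EuclideanSpace.norm_single, hr]
  set X := sphere (0 : E) 1 with hX
  obtain ⟨N, hN⟩ : ∃ z : X, (z : E) = EuclideanSpace.single i0 1 :=
    ⟨⟨_, hmem i0 1 (by norm_num)⟩, rfl⟩
  obtain ⟨S, hS⟩ : ∃ z : X, (z : E) = EuclideanSpace.single i0 (-1) :=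
    ⟨⟨_, hmem i0 (-1) (by norm_num)⟩, rfl⟩
  obtain ⟨x₀, hx₀⟩ : ∃ z : X, (z : E) = EuclideanSpace.single i1 1 :=
    ⟨⟨_, hmem i1 1 (by norm_num)⟩, rfl⟩
  set U : Set X := {N}ᶜ with hU
  set V : Set X := {S}ᶜ with hV
  have happly : ∀ (z w : X), (z : E) i0 ≠ (w : E) i0 → z ≠ w := by
    intro z w h hzw; exact h (by rw [hzw])
  have hNS : N ≠ S := by
    apply happly
    rw [hN, hS]
    simp [EuclideanSpace.single_apply]
    norm_num
  have hx₀U : x₀ ∈ U := by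
    apply happly
    rw [hN, hx₀]
    simp [EuclideanSpace.single_apply, hi01, Ne.symm hi01]
  have hx₀V : x₀ ∈ V := by
    apply happly
    rw [hS, hx₀]
    simp [EuclideanSpace.single_apply, hi01, Ne.symm hi01]
  haveI hUsc : SimplyConnectedSpace U := simplyConnected_compl N
  haveI hVsc : SimplyConnectedSpace V := simplyConnected_compl S
  have hUpc : IsPathConnected U := isPathConnected_compl (by omega) N
  have hVpc : IsPathConnected V := isPathConnected_compl (by omega) S
  have hUVpc : IsPathConnected (U ∩ V) := isPathConnected_compl_pair hn N S
  -- choose reference paths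
  have hα : ∀ z : X, ∃ q : Path x₀ z, (z ∈ U → ∀ u, q u ∈ U) ∧ (z ∈ V → ∀ u, q u ∈ V) := by
    intro z
    by_cases hzU : z ∈ U <;> by_cases hzV : z ∈ V
    · obtain j := hUVpc.joinedIn x₀ ⟨hx₀U, hx₀V⟩ z ⟨hzU, hzV⟩
      exact ⟨j.somePath, fun _ u => (j.somePath_mem u).1, fun _ u => (j.somePath_mem u).2⟩
    · obtain j := hUpc.joinedIn x₀ hx₀U z hzU
      exact ⟨j.somePath, fun _ u => j.somePath_mem u, fun h => absurd h hzV⟩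
    · obtain j := hVpc.joinedIn x₀ hx₀V z hzV
      exact ⟨j.somePath, fun h => absurd h hzU, fun _ u => j.somePath_mem u⟩
    · exfalso
      simp only [U, V, Set.mem_compl_iff, Set.mem_singleton_iff, not_not] at hzU hzV
      exact hNS (hzU ▸ hzV ▸ rfl)
  choose α hαU hαV using hα
  have hcover : ∀ z : X, z ∈ U ∨ z ∈ V := by
    intro z
    by_cases h : z = N
    · right; subst h; exact fun hc => hNS hc
    · left; exact h
  -- data about the two open sets, uniformly
  let d : Bool → Set X := fun b => bif b then U else V
  have hd_open : ∀ b, IsOpen (d b) := by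
    intro b; cases b <;> exact isOpen_compl_singleton
  haveI hd_sc : ∀ b, SimplyConnectedSpace (d b) := by
    intro b; cases b
    · exact hVsc
    · exact hUsc
  have hd_α : ∀ b, ∀ z ∈ d b, ∀ u, α z u ∈ d b := by
    intro b; cases b
    · exact fun z hz u => hαV z hz u
    · exact fun z hz u => hαU z hz u
  -- the master lemma
  have master : ∀ (xa xb : X) (p : Path xa xb), p.Homotopic ((α xa).symm.trans (α xb)) := by
    intro xa xb p
    let c : Bool → Set I := fun b => p ⁻¹' (d b)
    have hc1 : ∀ b, IsOpen (c b) := fun b => (hd_open b).preimage p.continuous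
    have hc2 : Set.univ ⊆ ⋃ b, c b := by
      intro u _
      rcases hcover (p u) with h | h
      · exact Set.mem_iUnion.2 ⟨true, h⟩
      · exact Set.mem_iUnion.2 ⟨false, h⟩
    obtain ⟨t, ht0, htmono, ⟨m, htm⟩, htsub⟩ :=
      exists_monotone_Icc_subset_open_cover_unitInterval hc1 hc2
    have h0k : ∀ k, (0:ℝ) ≤ ↑(t k) := fun k => (t k).2.1
    have hk1 : ∀ k, ((t k):ℝ) ≤ 1 := fun k => (t k).2.2
    have hx : ∀ k : ℕ, xa = p.extend 0 := fun _ => p.extend_zero.symm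
    have hy : ∀ k : ℕ, p (t k) = p.extend ↑(t k) := fun k => (p.extend_extends' (t k)).symm
    have key : ∀ k, ((p.truncateOfLE (h0k k)).cast (hx k) (hy k)).Homotopic
        ((α xa).symm.trans (α (p (t k)))) := by
      intro k
      induction k with
      | zero =>
        apply base_aux
        · rw [ht0]; exact p.source
        · intro u
          rw [Path.cast_coe]
          show p.extend (min (max ↑u 0) ↑(t 0)) = xa
          rw [ht0, Icc.coe_zero, max_eq_left u.2.1, min_eq_right u.2.1]
          exact p.extend_zero
      | succ k ih =>
        have hkk : (↑(t k):ℝ) ≤ ↑(t (k+1)) := by exact_mod_cast htmono (Nat.le_succ k)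
        have hsplit := truncate_split p (le_refl (0:ℝ)) (h0k k) hkk (hk1 (k+1))
        have hcast := homotopic_cast hsplit (hx (k+1)) (hy (k+1))
        rw [cast_trans _ _ (hx (k+1)) (hy k) (hy (k+1))] at hcast
        obtain ⟨bW, hbW⟩ := htsub k
        have hσmem : ∀ u, ((p.truncateOfLE hkk).cast (hy k) (hy (k+1))) u ∈ d bW := by
          intro u
          rw [Path.cast_coe]
          show p.extend (min (max ↑u ↑(t k)) ↑(t (k+1))) ∈ d bW
          have h1 : (↑(t k):ℝ) ≤ min (max ↑u ↑(t k)) ↑(t (k+1)) :=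
            le_min (le_max_right _ _) hkk
          have h2 : min (max (↑u:ℝ) ↑(t k)) ↑(t (k+1)) ≤ ↑(t (k+1)) := min_le_right _ _
          have hmemI : min (max (↑u:ℝ) ↑(t k)) ↑(t (k+1)) ∈ Icc (0:ℝ) 1 :=
            ⟨(h0k k).trans h1, h2.trans (hk1 (k+1))⟩
          rw [p.extend_apply hmemI]
          exact hbW ⟨by exact_mod_cast h1, by exact_mod_cast h2⟩
        have hendk : p (t k) ∈ d bW := hbW ⟨le_refl (t k), htmono (Nat.le_succ k)⟩
        have hendk1 : p (t (k+1)) ∈ d bW := hbW ⟨htmono (Nat.le_succ k), le_refl _⟩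
        haveI := hd_sc bW
        have hinner : ((α (p (t k))).trans
            ((p.truncateOfLE hkk).cast (hy k) (hy (k+1)))).Homotopic (α (p (t (k+1)))) := by
          apply homotopic_of_mem (W := d bW)
          · intro u
            rw [Path.trans_apply]
            split_ifs
            · exact hd_α bW _ hendk _
            · exact hσmem _
          · intro u
            exact hd_α bW _ hendk1 u
        refine hcast.trans ?_
        refine (Path.Homotopic.hcomp ih (Path.Homotopic.refl _)).trans ?_
        refine Path.Homotopic.trans ?_
          (Path.Homotopic.hcomp (Path.Homotopic.refl ((α xa).symm)) hinner)
        exact ⟨Path.Homotopy.transAssoc _ _ _⟩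
    -- conclude
    have e1 : p (t m) = xb := by rw [htm m le_rfl]; exact p.target
    apply transfer_aux α e1 _ p _ (key m)
    intro u
    rw [Path.cast_coe]
    show p.extend (min (max ↑u 0) ↑(t m)) = p u
    rw [htm m le_rfl]
    rw [max_eq_left u.2.1]
    rw [Icc.coe_one, min_eq_left u.2.2]
    exact p.extend_extends' u
  rw [simply_connected_iff_paths_homotopic']
  constructor
  · rw [← isPathConnected_iff_pathConnectedSpace]
    apply isPathConnected_sphere _ 0 zero_le_one
    rw [← Module.finrank_eq_rank, finrank_euclideanSpace_fin]
    exact_mod_cast (by omega : 1 < n + 1)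
  · intro x y p₁ p₂
    exact (master x y p₁).trans (master x y p₂).symm
end
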